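/- arXiv:2411.02819 — 10 statements merged into one kernel-verified Lean document; each statement's English description precedes it below -/
import Mathlib

section
/- Let X be a connected pure 2-dimensional simplicial complex, let N be a group acting simplicially on X such that the quotient projection p : X → N\X is rigid (i.e., for every simplex σ of X, distinct vertices of σ lie in distinct N-orbits), and let Λ be any group. If every Λ-valued 1-cocycle on X is a 1-coboundary and every group homomorphism from N to Λ is trivial, then every Λ-valued 1-cocycle on the quotient complex N\X is a 1-coboundary. -/
/-- Let `X` be a connected pure 2-dimensional simplicial complex (on the
vertex type `V`), let `N` act simplicially on `X` so that the quotient projection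
`p : X → N\X` is rigid (distinct vertices of each simplex lie in distinct `N`-orbits),
and let `Λ` be any group.  If every `Λ`-valued `1`-cocycle on `X` is a `1`-coboundary and
every homomorphism `N → Λ` is trivial, then every `Λ`-valued `1`-cocycle on the quotient
complex `N\X` is a `1`-coboundary.

Here the quotient complex `N\X` has the `N`-orbits of vertices as vertices; a set of
orbits is a simplex iff it is the set of orbits of the vertices of some simplex of `X`. -/
theorem h1_trivial_of_quotient {V : Type*} [DecidableEq V] (X : Set (Finset V))
    -- `X` is a simplicial complex all of whose vertices are the elements of `V`:
    (hdown : ∀ σ ∈ X, ∀ τ : Finset V, τ ⊆ σ → τ ∈ X)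
    (hvert : ∀ v : V, ({v} : Finset V) ∈ X)
    -- `X` is pure 2-dimensional:
    (hpure : ∀ σ ∈ X, ∃ τ ∈ X, σ ⊆ τ ∧ τ.card = 3)
    -- `X` is connected (its 1-skeleton graph is connected):
    (hconn : (SimpleGraph.fromRel fun u v => ({u, v} : Finset V) ∈ X).Connected)
    -- `N` acts simplicially on `X`:
    (N : Type*) [Group N] [MulAction N V]
    (hact : ∀ (g : N), ∀ σ ∈ X, Finset.image (fun v => g • v) σ ∈ X)
    -- the projection to the quotient is rigid:
    (hrigid : ∀ σ ∈ X, ∀ u ∈ σ, ∀ v ∈ σ,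
      Quotient.mk (MulAction.orbitRel N V) u = Quotient.mk (MulAction.orbitRel N V) v →
        u = v)
    (Λ : Type*) [Group Λ]
    -- every `Λ`-valued 1-cocycle on `X` is a 1-coboundary:
    (hX : ∀ φ : V → V → Λ,
      (∀ u v, u ≠ v → ({u, v} : Finset V) ∈ X → φ u v = (φ v u)⁻¹) →
      (∀ u v w, u ≠ v → u ≠ w → v ≠ w → ({u, v, w} : Finset V) ∈ X →
        φ u v * φ v w * φ w u = 1) →
      ∃ ψ : V → Λ, ∀ u v, u ≠ v → ({u, v} : Finset V) ∈ X → φ u v = ψ u * (ψ v)⁻¹)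
    -- every homomorphism `N → Λ` is trivial:
    (hN : ∀ f : N →* Λ, ∀ g, f g = 1)
    -- a `Λ`-valued 1-cocycle on the quotient complex `N\X`:
    (φ : Quotient (MulAction.orbitRel N V) → Quotient (MulAction.orbitRel N V) → Λ)
    (hsym : ∀ a b, a ≠ b →
      (∃ u v : V, Quotient.mk (MulAction.orbitRel N V) u = a ∧
        Quotient.mk (MulAction.orbitRel N V) v = b ∧ ({u, v} : Finset V) ∈ X) →
      φ a b = (φ b a)⁻¹)
    (hcoc : ∀ a b c, a ≠ b → a ≠ c → b ≠ c →
      (∃ u v w : V, Quotient.mk (MulAction.orbitRel N V) u = a ∧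
        Quotient.mk (MulAction.orbitRel N V) v = b ∧
        Quotient.mk (MulAction.orbitRel N V) w = c ∧ ({u, v, w} : Finset V) ∈ X) →
      φ a b * φ b c * φ c a = 1) :
    -- then it is a 1-coboundary:
    ∃ ψ : Quotient (MulAction.orbitRel N V) → Λ, ∀ a b, a ≠ b →
      (∃ u v : V, Quotient.mk (MulAction.orbitRel N V) u = a ∧
        Quotient.mk (MulAction.orbitRel N V) v = b ∧ ({u, v} : Finset V) ∈ X) →
      φ a b = ψ a * (ψ b)⁻¹ := by

  classical
  rcases isEmpty_or_nonempty V with hV | hV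
  · refine ⟨fun _ => 1, ?_⟩
    rintro a b - ⟨u, -⟩
    exact (hV.false u).elim
  -- distinct vertices of a simplex have distinct orbits
  have hneσ : ∀ σ ∈ X, ∀ u ∈ σ, ∀ v ∈ σ, u ≠ v →
      Quotient.mk (MulAction.orbitRel N V) u ≠ Quotient.mk (MulAction.orbitRel N V) v :=
    fun σ hσ u hu v hv huv h => huv (hrigid σ hσ u hu v hv h)
  -- pull back the cocycle
  set φ' : V → V → Λ := fun u v =>
    φ (Quotient.mk (MulAction.orbitRel N V) u) (Quotient.mk (MulAction.orbitRel N V) v)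
    with hφ'
  have hsym' : ∀ u v, u ≠ v → ({u, v} : Finset V) ∈ X → φ' u v = (φ' v u)⁻¹ := by
    intro u v huv hm
    exact hsym _ _ (hneσ _ hm u (by simp) v (by simp) huv) ⟨u, v, rfl, rfl, hm⟩
  have hcoc' : ∀ u v w, u ≠ v → u ≠ w → v ≠ w → ({u, v, w} : Finset V) ∈ X →
      φ' u v * φ' v w * φ' w u = 1 := by
    intro u v w huv huw hvw hm
    exact hcoc _ _ _ (hneσ _ hm u (by simp) v (by simp) huv)
      (hneσ _ hm u (by simp) w (by simp) huw)
      (hneσ _ hm v (by simp) w (by simp) hvw)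
      ⟨u, v, w, rfl, rfl, rfl, hm⟩
  obtain ⟨ψ, hψ⟩ := hX φ' hsym' hcoc'
  -- Quotient.mk is N-invariant
  have hmk : ∀ (g : N) (u : V),
      Quotient.mk (MulAction.orbitRel N V) (g • u) = Quotient.mk (MulAction.orbitRel N V) u :=
    fun g u => Quotient.sound ⟨g, rfl⟩
  -- the defect of N-invariance of ψ is constant along edges
  have hedge : ∀ (g : N) (u v : V), u ≠ v → ({u, v} : Finset V) ∈ X →
      (ψ u)⁻¹ * ψ (g • u) = (ψ v)⁻¹ * ψ (g • v) := by
    intro g u v huv hm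
    have hm' : ({g • u, g • v} : Finset V) ∈ X := by
      have := hact g _ hm
      simpa [Finset.image_insert] using this
    have hne' : g • u ≠ g • v := fun h => huv (MulAction.injective g h)
    have h1 : φ' (g • u) (g • v) = φ' u v := by
      simp only [hφ', hmk]
    have h2 := hψ _ _ hne' hm'
    have h3 := hψ _ _ huv hm
    rw [h2, h3] at h1
    -- from ψ(gu) * ψ(gv)⁻¹ = ψ u * ψ v⁻¹
    have h4 : ψ (g • u) = ψ u * (ψ v)⁻¹ * ψ (g • v) := by
      rw [← h1]; group
    rw [h4]; group
  -- hence constant everywhere, by connectedness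
  have hconst : ∀ (g : N) (u v : V), (ψ u)⁻¹ * ψ (g • u) = (ψ v)⁻¹ * ψ (g • v) := by
    intro g u v
    have hreach := hconn.preconnected u v
    obtain ⟨w⟩ := hreach
    induction w with
    | nil => rfl
    | cons hadj _ ih =>
      rename_i x y z _
      refine Eq.trans ?_ ih
      obtain ⟨hxy, hmem⟩ := hadj
      rcases hmem with hmem | hmem
      · exact hedge g x y hxy hmem
      · exact hedge g x y hxy (by rwa [Finset.pair_comm])
  -- the defect gives a homomorphism N → Λ, which is trivial
  obtain ⟨v₀⟩ := hV
  have hmul : ∀ g h : N,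
      (ψ v₀)⁻¹ * ψ ((g * h)⁻¹ • v₀)
        = ((ψ v₀)⁻¹ * ψ (g⁻¹ • v₀)) * ((ψ v₀)⁻¹ * ψ (h⁻¹ • v₀)) := by
    intro g h
    have key := hconst h⁻¹ (g⁻¹ • v₀) v₀
    have : (g * h)⁻¹ • v₀ = h⁻¹ • g⁻¹ • v₀ := by rw [mul_inv_rev, mul_smul]
    rw [this]
    calc (ψ v₀)⁻¹ * ψ (h⁻¹ • g⁻¹ • v₀)
        = ((ψ v₀)⁻¹ * ψ (g⁻¹ • v₀)) * ((ψ (g⁻¹ • v₀))⁻¹ * ψ (h⁻¹ • g⁻¹ • v₀)) := by group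
      _ = ((ψ v₀)⁻¹ * ψ (g⁻¹ • v₀)) * ((ψ v₀)⁻¹ * ψ (h⁻¹ • v₀)) := by rw [key]
  let f : N →* Λ :=
    { toFun := fun g => (ψ v₀)⁻¹ * ψ (g⁻¹ • v₀)
      map_one' := by simp
      map_mul' := hmul }
  have hfix : ∀ (g : N) (u : V), ψ (g • u) = ψ u := by
    intro g u
    have h1 : (ψ u)⁻¹ * ψ (g • u) = (ψ v₀)⁻¹ * ψ (g • v₀) := hconst g u v₀
    have h2 : (ψ v₀)⁻¹ * ψ (g • v₀) = f g⁻¹ := by simp [f]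
    have h3 : f g⁻¹ = 1 := hN f g⁻¹
    have : (ψ u)⁻¹ * ψ (g • u) = 1 := by rw [h1, h2, h3]
    calc ψ (g • u) = ψ u * ((ψ u)⁻¹ * ψ (g • u)) := by group
      _ = ψ u := by rw [this]; group
  -- descend ψ to the quotient
  refine ⟨Quotient.lift ψ ?_, ?_⟩
  · rintro a b ⟨g, rfl⟩
    exact hfix g b
  · rintro a b hab ⟨u, v, rfl, rfl, hm⟩
    have huv : u ≠ v := fun h => hab (by rw [h])
    exact hψ u v huv hm
end

section
/- Let n ≥ 2, let Γ be a group with subgroups K_0,…,K_n whose union generates Γ, let N be a normal subgroup of Γ, and let Λ be any group. If every group homomorphism from N to Λ is trivial and H^1(CC(Γ,{K_i}),Λ) = 0, then H^1(CC(Γ/N, {images of K_i in Γ/N}),Λ) = 0, i.e., every Λ-valued 1-cocycle on the coset complex of Γ/N with respect to the images of the K_i is a 1-coboundary. -/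
/-- The vertices of the coset complex `CC(Γ, {K_0,…,K_n})`: left cosets `gK_i`. -/
def ccVert {Γ : Type*} [Group Γ] {n : ℕ} (K : Fin (n + 1) → Subgroup Γ) :=
  Σ i : Fin (n + 1), Γ ⧸ K i

/-- Two vertices of the coset complex are adjacent (span an edge) iff they have different
colors and the corresponding cosets intersect nontrivially; simplices of the coset complex
are sets of pairwise adjacent vertices. -/
def ccAdj {Γ : Type*} [Group Γ] {n : ℕ} (K : Fin (n + 1) → Subgroup Γ) :
    ccVert K → ccVert K → Prop := fun u v =>
  u.1 ≠ v.1 ∧ ∃ g : Γ,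
    (QuotientGroup.mk g : Γ ⧸ K u.1) = u.2 ∧ (QuotientGroup.mk g : Γ ⧸ K v.1) = v.2

/-- `H¹(X, Λ) = 0` for the complex whose edges are given by `Adj` and whose `2`-simplices
are the triples of pairwise adjacent vertices: every `Λ`-valued `1`-cocycle is a
`1`-coboundary. -/
def H1Trivial {V : Type*} (Adj : V → V → Prop) (Λ : Type*) [Group Λ] : Prop :=
  ∀ φ : V → V → Λ,
    (∀ u v, Adj u v → φ u v = (φ v u)⁻¹) →
    (∀ u v w, Adj u v → Adj v w → Adj u w → φ u v * φ v w * φ w u = 1) →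
    ∃ ψ : V → Λ, ∀ u v, Adj u v → φ u v = ψ u * (ψ v)⁻¹

/-!
Pull a cocycle `φ` on `CC(Γ/N)` back to `CC(Γ)`, where it becomes a coboundary `δψ`. Since the
projection is `N`-invariant, for `ν ∈ N` the displacement `ψ(ν • u)⁻¹ ψ(u)` is constant along
edges, hence constant on the connected complex `CC(Γ)`, and as a function of `ν` it is a
homomorphism `N →* Λ`. It is therefore trivial, so `ψ` is constant on the fibres of the
projection, which are exactly the `N`-orbits, and descends to a primitive of `φ`.
-/

open Function Relation

theorem exists_coboundary_of_factorsThrough {V W Λ : Type*} [Group Λ]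
    {AdjV : V → V → Prop} {AdjW : W → W → Prop} (π : V → W)
    (hlift : ∀ a b, AdjW a b → ∃ u v, AdjV u v ∧ π u = a ∧ π v = b)
    {φ : W → W → Λ} {ψ : V → Λ} (hψ : ψ.FactorsThrough π)
    (hφψ : ∀ u v, AdjV u v → φ (π u) (π v) = ψ u * (ψ v)⁻¹) :
    ∃ ψ' : W → Λ, ∀ a b, AdjW a b → φ a b = ψ' a * (ψ' b)⁻¹ := by
  refine ⟨extend π ψ 1, fun a b hab => ?_⟩
  obtain ⟨u, v, huv, rfl, rfl⟩ := hlift a b hab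
  rw [hψ.extend_apply, hψ.extend_apply, hφψ u v huv]

section Displacement

variable {G V Λ : Type*} [Group G] [MulAction G V] [Group Λ] {Adj : V → V → Prop}
  {ψ : V → Λ}

theorem inv_mul_eq_of_reflTransGen {g : G}
    (hψ : ∀ a b, Adj a b → ψ (g • a) * (ψ (g • b))⁻¹ = ψ a * (ψ b)⁻¹)
    {a b : V} (hab : ReflTransGen Adj a b) :
    (ψ (g • a))⁻¹ * ψ a = (ψ (g • b))⁻¹ * ψ b := by
  induction hab with
  | refl => rfl
  | tail _ hbc ih =>
    rw [ih, inv_mul_eq_iff_eq_mul, ← mul_assoc, hψ _ _ hbc, inv_mul_cancel_right]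

variable {N : Subgroup G}

/-- The displacement `ν ↦ ψ(ν • u)⁻¹ ψ(u)`; it does not depend on `u`, which makes it
multiplicative. -/
def displacementHom (hconn : ∀ u v, ReflTransGen Adj u v)
    (hψ : ∀ ν ∈ N, ∀ a b, Adj a b → ψ (ν • a) * (ψ (ν • b))⁻¹ = ψ a * (ψ b)⁻¹)
    (u : V) : N →* Λ where
  toFun ν := (ψ ((ν : G) • u))⁻¹ * ψ u
  map_one' := by simp
  map_mul' ν μ := by
    have hconst := inv_mul_eq_of_reflTransGen (hψ ν ν.2) (hconn (μ • u) u)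
    simp only [Subgroup.coe_mul, mul_smul, Subgroup.smul_def] at hconst ⊢
    rw [← hconst]
    group

theorem smul_eq_of_forall_monoidHom_eq_one (hconn : ∀ u v, ReflTransGen Adj u v)
    (hψ : ∀ ν ∈ N, ∀ a b, Adj a b → ψ (ν • a) * (ψ (ν • b))⁻¹ = ψ a * (ψ b)⁻¹)
    (hN : ∀ f : N →* Λ, ∀ x, f x = 1) {ν : G} (hν : ν ∈ N) (u : V) : ψ (ν • u) = ψ u :=
  inv_mul_eq_one.mp (hN (displacementHom hconn hψ u) ⟨ν, hν⟩)

variable {W : Type*} {AdjV : V → V → Prop} {AdjW : W → W → Prop}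

theorem H1Trivial.of_map_of_fibers_eq_orbits (π : V → W)
    (hconn : ∀ u v, ReflTransGen AdjV u v)
    (hsmul : ∀ ν ∈ N, ∀ u v, AdjV u v → AdjV (ν • u) (ν • v))
    (hπ_smul : ∀ ν ∈ N, ∀ u, π (ν • u) = π u)
    (hπ_fiber : ∀ u v, π u = π v → ∃ ν ∈ N, ν • u = v)
    (hπ_adj : ∀ u v, AdjV u v → AdjW (π u) (π v))
    (hπ_lift : ∀ a b, AdjW a b → ∃ u v, AdjV u v ∧ π u = a ∧ π v = b)
    (hN : ∀ f : N →* Λ, ∀ x, f x = 1) (hV : H1Trivial AdjV Λ) :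
    H1Trivial AdjW Λ := by
  intro φ hφ_symm hφ_cocycle
  obtain ⟨ψ, hψ⟩ := hV (fun u v => φ (π u) (π v))
    (fun u v h => hφ_symm _ _ (hπ_adj u v h))
    (fun u v w h₁ h₂ h₃ =>
      hφ_cocycle _ _ _ (hπ_adj u v h₁) (hπ_adj v w h₂) (hπ_adj u w h₃))
  have hψ_smul : ∀ ν ∈ N, ∀ a b, AdjV a b → ψ (ν • a) * (ψ (ν • b))⁻¹ = ψ a * (ψ b)⁻¹ :=
    fun ν hν a b hab => by
      rw [← hψ a b hab, ← hψ _ _ (hsmul ν hν a b hab), hπ_smul ν hν, hπ_smul ν hν]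
  refine exists_coboundary_of_factorsThrough π hπ_lift (fun u v huv => ?_) hψ
  obtain ⟨ν, hν, rfl⟩ := hπ_fiber u v huv
  exact (smul_eq_of_forall_monoidHom_eq_one hconn hψ_smul hN hν u).symm

end Displacement

section CosetComplex

variable {Γ Δ : Type*} [Group Γ] [Group Δ] {n : ℕ} {K : Fin (n + 1) → Subgroup Γ}

theorem ccAdj_iff {u v : ccVert K} :
    ccAdj K u v ↔ ∃ i j, i ≠ j ∧ ∃ x : Γ, u = ⟨i, (x : Γ ⧸ K i)⟩ ∧ v = ⟨j, (x : Γ ⧸ K j)⟩ := by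
  obtain ⟨i, q⟩ := u
  obtain ⟨j, q'⟩ := v
  constructor
  · rintro ⟨hne, x, hxq, hxq'⟩
    exact ⟨i, j, hne, x, congrArg _ hxq.symm, congrArg _ hxq'.symm⟩
  · rintro ⟨i, j, hne, x, ⟨⟩, ⟨⟩⟩
    exact ⟨hne, x, rfl, rfl⟩

instance : MulAction Γ (ccVert K) := inferInstanceAs (MulAction Γ (Σ i, Γ ⧸ K i))

theorem ccAdj.smul {u v : ccVert K} (h : ccAdj K u v) (g : Γ) :
    ccAdj K (g • u) (g • v) := by
  obtain ⟨i, j, hne, x, rfl, rfl⟩ := ccAdj_iff.mp h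
  exact ccAdj_iff.mpr ⟨i, j, hne, g * x, rfl, rfl⟩

theorem reflTransGen_ccAdj_mk (x : Γ) (i j : Fin (n + 1)) :
    ReflTransGen (ccAdj K) ⟨i, (x : Γ ⧸ K i)⟩ ⟨j, (x : Γ ⧸ K j)⟩ := by
  rcases eq_or_ne i j with rfl | hne
  · exact .refl
  · exact .single (ccAdj_iff.mpr ⟨i, j, hne, x, rfl, rfl⟩)

theorem reflTransGen_ccAdj (hgen : Subgroup.closure (⋃ i, (K i : Set Γ)) = ⊤)
    (u v : ccVert K) : ReflTransGen (ccAdj K) u v := by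
  obtain ⟨i, q⟩ := u
  obtain ⟨j, q'⟩ := v
  obtain ⟨x, rfl⟩ := QuotientGroup.mk_surjective q
  obtain ⟨y, rfl⟩ := QuotientGroup.mk_surjective q'
  suffices h : ∀ z ∈ ⨆ i, K i, ∀ (x : Γ) i j,
      ReflTransGen (ccAdj K) ⟨i, (x : Γ ⧸ K i)⟩ ⟨j, ((x * z : Γ) : Γ ⧸ K j)⟩ by
    simpa using h (x⁻¹ * y) (by rw [Subgroup.iSup_eq_closure, hgen]; trivial) x i j
  intro z hz
  refine Subgroup.iSup_induction K (x := z) hz (fun k z hz x i j => ?_) (fun x i j => ?_)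
    (fun z w hz hw x i j => ?_)
  · have hk : ((x * z : Γ) : Γ ⧸ K k) = x := by simpa [QuotientGroup.eq] using hz
    refine (reflTransGen_ccAdj_mk x i k).trans ?_
    rw [← hk]
    exact reflTransGen_ccAdj_mk _ k j
  · simpa using reflTransGen_ccAdj_mk x i j
  · simpa [mul_assoc] using (hz x i i).trans (hw (x * z) i j)

/-- The simplicial map `CC(Γ, {K_i}) → CC(Δ, {f(K_i)})` induced by `f : Γ →* Δ`. -/
def ccMap (f : Γ →* Δ) (u : ccVert K) : ccVert (fun i => (K i).map f) :=
  ⟨u.1, Quotient.map' f (fun _ _ hab => QuotientGroup.leftRel_apply.mpr <| by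
    simpa using Subgroup.mem_map_of_mem f (QuotientGroup.leftRel_apply.mp hab)) u.2⟩

theorem ccMap_smul (f : Γ →* Δ) (g : Γ) (u : ccVert K) : ccMap f (g • u) = f g • ccMap f u := by
  obtain ⟨i, q⟩ := u
  obtain ⟨x, rfl⟩ := QuotientGroup.mk_surjective q
  have hmul : ((f (g * x) : Δ) : Δ ⧸ (K i).map f) = ((f g * f x : Δ) : Δ ⧸ (K i).map f) := by
    rw [map_mul]
  exact congrArg (Sigma.mk i) hmul

theorem ccAdj.map (f : Γ →* Δ) {u v : ccVert K} (h : ccAdj K u v) :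
    ccAdj (fun i => (K i).map f) (ccMap f u) (ccMap f v) := by
  obtain ⟨i, j, hne, x, rfl, rfl⟩ := ccAdj_iff.mp h
  exact ccAdj_iff.mpr ⟨i, j, hne, f x, rfl, rfl⟩

theorem exists_ccAdj_ccMap_eq {f : Γ →* Δ} (hf : Surjective f)
    {a b : ccVert (fun i => (K i).map f)} (h : ccAdj _ a b) :
    ∃ u v, ccAdj K u v ∧ ccMap f u = a ∧ ccMap f v = b := by
  obtain ⟨i, j, hne, y, rfl, rfl⟩ := ccAdj_iff.mp h
  obtain ⟨x, rfl⟩ := hf y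
  exact ⟨⟨i, x⟩, ⟨j, x⟩, ccAdj_iff.mpr ⟨i, j, hne, x, rfl, rfl⟩, rfl, rfl⟩

theorem exists_mem_ker_smul_eq_of_ccMap_eq (f : Γ →* Δ) {u v : ccVert K}
    (h : ccMap f u = ccMap f v) : ∃ ν ∈ f.ker, ν • u = v := by
  obtain ⟨i, q⟩ := u
  obtain ⟨j, q'⟩ := v
  obtain ⟨x, rfl⟩ := QuotientGroup.mk_surjective q
  obtain ⟨y, rfl⟩ := QuotientGroup.mk_surjective q'
  obtain ⟨rfl, hxy⟩ := Sigma.mk.inj_iff.mp h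
  have hxy : (f x : Δ ⧸ (K i).map f) = f y := eq_of_heq hxy
  obtain ⟨k, hk, hfk⟩ := Subgroup.mem_map.mp (QuotientGroup.eq.mp hxy)
  refine ⟨y * k⁻¹ * x⁻¹, by simp [MonoidHom.mem_ker, hfk], ?_⟩
  have hyk : ((y * k⁻¹ * x⁻¹ * x : Γ) : Γ ⧸ K i) = y := by
    rw [inv_mul_cancel_right, QuotientGroup.eq]
    simpa using hk
  exact congrArg (Sigma.mk i) hyk

end CosetComplex

theorem h1_trivial_quotient_cosetComplex_general {Γ : Type*} [Group Γ] (n : ℕ)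
    (K : Fin (n + 1) → Subgroup Γ)
    (hgen : Subgroup.closure (⋃ i, (K i : Set Γ)) = ⊤)
    (N : Subgroup Γ) [N.Normal]
    (Λ : Type*) [Group Λ]
    (hN : ∀ f : N →* Λ, ∀ x, f x = 1)
    (hX : H1Trivial (ccAdj K) Λ) :
    H1Trivial (ccAdj fun i => (K i).map (QuotientGroup.mk' N)) Λ := by
  rw [← QuotientGroup.ker_mk' N] at hN
  exact H1Trivial.of_map_of_fibers_eq_orbits (ccMap (QuotientGroup.mk' N))
    (reflTransGen_ccAdj hgen) (fun ν _ u v h => h.smul ν)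
    (fun ν hν u => by rw [ccMap_smul, hν, one_smul])
    (fun u v => exists_mem_ker_smul_eq_of_ccMap_eq _) (fun u v => ccAdj.map _)
    (fun a b => exists_ccAdj_ccMap_eq (QuotientGroup.mk'_surjective N)) hN hX

/-- Let `n ≥ 2`, let `Γ` be a group with subgroups `K_0,…,K_n` whose union
generates `Γ`, let `N ⊴ Γ`, and let `Λ` be any group.  If every homomorphism `N → Λ` is
trivial and `H¹(CC(Γ,{K_i}), Λ) = 0`, then `H¹(CC(Γ/N, {images of K_i}), Λ) = 0`. -/
theorem h1_trivial_quotient_cosetComplex {Γ : Type*} [Group Γ] (n : ℕ) (hn : 2 ≤ n)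
    (K : Fin (n + 1) → Subgroup Γ)
    (hgen : Subgroup.closure (⋃ i, (K i : Set Γ)) = ⊤)
    (N : Subgroup Γ) [N.Normal]
    (Λ : Type*) [Group Λ]
    (hN : ∀ f : N →* Λ, ∀ x, f x = 1)
    (hX : H1Trivial (ccAdj K) Λ) :
    H1Trivial (ccAdj fun i => (K i).map (QuotientGroup.mk' N)) Λ :=
  h1_trivial_quotient_cosetComplex_general n K hgen N Λ hN hX
end

section
/- Let R be a unital commutative ring, n ≥ 2, and I an ideal of R. The kernel of the homomorphism St_{n+1}(R) → St_{n+1}(R/I) induced by the quotient map R → R/I (sending x_{i,j}(r) to x_{i,j}(r + I)) equals the normal closure in St_{n+1}(R) of the set {x_{i,j}(s) : 1 ≤ i,j ≤ n+1, i ≠ j, s ∈ I}. -/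
/-!
The normal closure `N` of the generators with entries in `I` lies in the kernel because
`x_{i,j}(0) = e`. Conversely, in `St_{n+1}(R) ⧸ N` the element `x_{i,j}(r)` only depends on
`r mod I`, so choosing representatives turns the images of the generators into a family over `R/I`
that still satisfies the Steinberg relations. It therefore defines a homomorphism
`St_{n+1}(R/I) → St_{n+1}(R) ⧸ N` whose composite with `f` is the projection, whence `ker f ≤ N`.
-/

noncomputable section

open scoped commutatorElement

/-- Index set of the Steinberg generators: pairs `(i,j)` with `i ≠ j`. -/
abbrev Idx (n : ℕ) := {ij : Fin (n + 1) × Fin (n + 1) // ij.1 ≠ ij.2}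

/-- The generators `x_{i,j}(r)` of the Steinberg group `St_{n+1}(R)`. -/
abbrev StGen (R : Type*) (n : ℕ) := Idx n × R

/-- The defining (Steinberg) relators of `St_{n+1}(R)`. -/
def stRels (R : Type*) [CommRing R] (n : ℕ) : Set (FreeGroup (StGen R n)) :=
  { w | -- x_{i,j}(0) = e
    (∃ ij : Idx n, w = FreeGroup.of ((ij, (0 : R)) : StGen R n)) ∨
    -- x_{i,j}(r₁) · x_{i,j}(r₂) = x_{i,j}(r₁ + r₂)
    (∃ (ij : Idx n) (r1 r2 : R),
      w = FreeGroup.of ((ij, r1) : StGen R n) * FreeGroup.of ((ij, r2) : StGen R n) *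
        (FreeGroup.of ((ij, r1 + r2) : StGen R n))⁻¹) ∨
    -- [x_{i,j}(r₁), x_{i',j'}(r₂)] = e  when  (i,j) ≠ (i',j'), j ≠ i' and j' ≠ i
    (∃ (ij ij' : Idx n) (r1 r2 : R), ij ≠ ij' ∧ ij.1.2 ≠ ij'.1.1 ∧ ij'.1.2 ≠ ij.1.1 ∧
      w = ⁅FreeGroup.of ((ij, r1) : StGen R n), FreeGroup.of ((ij', r2) : StGen R n)⁆) ∨
    -- [x_{i,j}(r₁), x_{j,k}(r₂)] = x_{i,k}(r₁r₂)  for pairwise distinct i, j, k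
    (∃ (i j k : Fin (n + 1)) (hij : i ≠ j) (hjk : j ≠ k) (hik : i ≠ k) (r1 r2 : R),
      w = ⁅FreeGroup.of ((⟨(i, j), hij⟩, r1) : StGen R n),
            FreeGroup.of ((⟨(j, k), hjk⟩, r2) : StGen R n)⁆ *
          (FreeGroup.of ((⟨(i, k), hik⟩, r1 * r2) : StGen R n))⁻¹) }

/-- The Steinberg group `St_{n+1}(R)`. -/
abbrev St (R : Type*) [CommRing R] (n : ℕ) := PresentedGroup (stRels R n)

/-- The generator `x_{i,j}(r)` of `St_{n+1}(R)`. -/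
def stOf {R : Type*} [CommRing R] {n : ℕ} (ij : Idx n) (r : R) : St R n :=
  PresentedGroup.of (ij, r)

section

variable {R S : Type*} [CommRing R] [CommRing S] {n : ℕ} {G H : Type*} [Group G] [Group H]

structure IsSteinbergFamily (x : Idx n → R → G) : Prop where
  apply_zero (ij : Idx n) : x ij 0 = 1
  apply_mul_apply (ij : Idx n) (r₁ r₂ : R) : x ij r₁ * x ij r₂ = x ij (r₁ + r₂)
  commutatorElement_eq_one {ij ij' : Idx n} (h : ij ≠ ij') (h₁ : ij.1.2 ≠ ij'.1.1)
    (h₂ : ij'.1.2 ≠ ij.1.1) (r₁ r₂ : R) : ⁅x ij r₁, x ij' r₂⁆ = 1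
  commutatorElement_eq {i j k : Fin (n + 1)} (hij : i ≠ j) (hjk : j ≠ k) (hik : i ≠ k)
    (r₁ r₂ : R) : ⁅x ⟨(i, j), hij⟩ r₁, x ⟨(j, k), hjk⟩ r₂⁆ = x ⟨(i, k), hik⟩ (r₁ * r₂)

namespace IsSteinbergFamily

variable {x : Idx n → R → G}

theorem comp (hx : IsSteinbergFamily x) (φ : G →* H) :
    IsSteinbergFamily fun ij r ↦ φ (x ij r) where
  apply_zero ij := by rw [hx.apply_zero, map_one]
  apply_mul_apply ij r₁ r₂ := by rw [← map_mul, hx.apply_mul_apply]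
  commutatorElement_eq_one h h₁ h₂ r₁ r₂ := by
    rw [← map_commutatorElement, hx.commutatorElement_eq_one h h₁ h₂, map_one]
  commutatorElement_eq hij hjk hik r₁ r₂ := by
    rw [← map_commutatorElement, hx.commutatorElement_eq]

theorem lift_eq_one_of_mem_stRels (hx : IsSteinbergFamily x) {w : FreeGroup (StGen R n)}
    (hw : w ∈ stRels R n) : FreeGroup.lift (fun p ↦ x p.1 p.2) w = 1 := by
  rcases hw with ⟨ij, rfl⟩ | ⟨ij, r₁, r₂, rfl⟩ | ⟨ij, ij', r₁, r₂, h, h₁, h₂, rfl⟩ |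
    ⟨i, j, k, hij, hjk, hik, r₁, r₂, rfl⟩
  · simp [hx.apply_zero]
  · simp [hx.apply_mul_apply]
  · simp [hx.commutatorElement_eq_one h h₁ h₂]
  · simp [hx.commutatorElement_eq hij hjk hik]

theorem apply_eq_of_map_eq (hx : IsSteinbergFamily x) {φ : R →+* S}
    (hker : ∀ ij, ∀ s ∈ RingHom.ker φ, x ij s = 1) (ij : Idx n) {r r' : R} (h : φ r = φ r') :
    x ij r = x ij r' := by
  have hsub : r - r' ∈ RingHom.ker φ := by rw [RingHom.mem_ker, map_sub, h, sub_self]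
  rw [← sub_add_cancel r r', ← hx.apply_mul_apply, hker ij _ hsub, one_mul]

theorem descend (hx : IsSteinbergFamily x) {φ : R →+* S} (hφ : Function.Surjective φ)
    (hker : ∀ ij, ∀ s ∈ RingHom.ker φ, x ij s = 1) :
    IsSteinbergFamily fun ij s ↦ x ij (Function.surjInv hφ s) := by
  have hσ : ∀ ij r s, φ r = s → x ij r = x ij (Function.surjInv hφ s) := fun ij _ s h ↦
    hx.apply_eq_of_map_eq hker ij (by rw [h, Function.surjInv_eq hφ])
  refine ⟨fun ij ↦ ?_, fun ij s₁ s₂ ↦ ?_, fun h h₁ h₂ s₁ s₂ ↦ ?_, fun hij hjk hik s₁ s₂ ↦ ?_⟩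
  · rw [← hσ ij 0 0 (map_zero φ), hx.apply_zero]
  · rw [hx.apply_mul_apply, hσ ij _ (s₁ + s₂) (by simp [Function.surjInv_eq hφ])]
  · exact hx.commutatorElement_eq_one h h₁ h₂ _ _
  · rw [hx.commutatorElement_eq, hσ _ _ (s₁ * s₂) (by simp [Function.surjInv_eq hφ])]

end IsSteinbergFamily

namespace St

theorem isSteinbergFamily_stOf : IsSteinbergFamily (stOf : Idx n → R → St R n) where
  apply_zero ij := PresentedGroup.one_of_mem (Or.inl ⟨ij, rfl⟩)
  apply_mul_apply ij r₁ r₂ :=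
    PresentedGroup.mk_eq_mk_of_mul_inv_mem (Or.inr (Or.inl ⟨ij, r₁, r₂, rfl⟩))
  commutatorElement_eq_one h h₁ h₂ r₁ r₂ :=
    PresentedGroup.one_of_mem (Or.inr (Or.inr (Or.inl ⟨_, _, r₁, r₂, h, h₁, h₂, rfl⟩)))
  commutatorElement_eq hij hjk hik r₁ r₂ := PresentedGroup.mk_eq_mk_of_mul_inv_mem
    (Or.inr (Or.inr (Or.inr ⟨_, _, _, hij, hjk, hik, r₁, r₂, rfl⟩)))

def lift (x : Idx n → R → G) (hx : IsSteinbergFamily x) : St R n →* G :=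
  PresentedGroup.toGroup fun _ ↦ hx.lift_eq_one_of_mem_stRels

@[simp]
theorem lift_stOf {x : Idx n → R → G} (hx : IsSteinbergFamily x) (ij : Idx n) (r : R) :
    lift x hx (stOf ij r) = x ij r :=
  PresentedGroup.toGroup.of _

theorem ker_eq_normalClosure_of_surjective {φ : R →+* S} (hφ : Function.Surjective φ)
    (f : St R n →* St S n) (hf : ∀ ij r, f (stOf ij r) = stOf ij (φ r)) :
    f.ker = Subgroup.normalClosure {g | ∃ ij, ∃ s ∈ RingHom.ker φ, g = stOf ij s} := by
  set N := Subgroup.normalClosure {g : St R n | ∃ ij, ∃ s ∈ RingHom.ker φ, g = stOf ij s}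
  have hπ : ∀ ij, ∀ s ∈ RingHom.ker φ, QuotientGroup.mk' N (stOf ij s) = 1 := fun ij s hs ↦
    (QuotientGroup.eq_one_iff _).mpr (Subgroup.subset_normalClosure ⟨ij, s, hs, rfl⟩)
  have hx := (isSteinbergFamily_stOf (R := R) (n := n)).comp (QuotientGroup.mk' N)
  have hcomp : (lift _ (hx.descend hφ hπ)).comp f = QuotientGroup.mk' N :=
    PresentedGroup.ext fun ⟨ij, r⟩ ↦ by
      change lift _ (hx.descend hφ hπ) (f (stOf ij r)) = QuotientGroup.mk' N (stOf ij r)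
      rw [hf, lift_stOf]
      exact hx.apply_eq_of_map_eq hπ ij (Function.surjInv_eq hφ _)
  refine le_antisymm ?_ (Subgroup.normalClosure_le_normal ?_)
  · calc f.ker ≤ (lift _ (hx.descend hφ hπ)).ker.comap f := f.ker_le_comap _
      _ = N := by rw [MonoidHom.comap_ker, hcomp, QuotientGroup.ker_mk']
  · rintro _ ⟨ij, s, hs, rfl⟩
    rw [SetLike.mem_coe, MonoidHom.mem_ker, hf, RingHom.mem_ker.mp hs,
      isSteinbergFamily_stOf.apply_zero]

end St

end

theorem ker_steinberg_quotient_eq_normalClosure_general (R : Type*) [CommRing R] (n : ℕ)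
    (I : Ideal R)
    (f : St R n →* St (R ⧸ I) n)
    (hf : ∀ (ij : Idx n) (r : R), f (stOf ij r) = stOf ij (Ideal.Quotient.mk I r)) :
    f.ker =
      Subgroup.normalClosure { g : St R n | ∃ (ij : Idx n), ∃ s ∈ I, g = stOf ij s } := by
  simpa only [Ideal.mk_ker] using
    St.ker_eq_normalClosure_of_surjective Ideal.Quotient.mk_surjective f hf

/-- Let `R` be a unital commutative ring, `n ≥ 2`, and `I` an ideal of `R`.
The kernel of the homomorphism `St_{n+1}(R) → St_{n+1}(R/I)` induced by the quotient map
`R → R/I` (i.e. sending `x_{i,j}(r)` to `x_{i,j}(r + I)`) equals the normal closure of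
`{x_{i,j}(s) : i ≠ j, s ∈ I}` in `St_{n+1}(R)`. -/
theorem ker_steinberg_quotient_eq_normalClosure (R : Type*) [CommRing R] (n : ℕ)
    (hn : 2 ≤ n) (I : Ideal R)
    (f : St R n →* St (R ⧸ I) n)
    (hf : ∀ (ij : Idx n) (r : R), f (stOf ij r) = stOf ij (Ideal.Quotient.mk I r)) :
    f.ker =
      Subgroup.normalClosure { g : St R n | ∃ (ij : Idx n), ∃ s ∈ I, g = stOf ij s } :=
  ker_steinberg_quotient_eq_normalClosure_general R n I f hf
end
end

section
/- Let n ≥ 2 and let p be a prime. Then SL_{n+1}(F_p[t]) = EL_{n+1}(F_p[t]): every (n+1)×(n+1) matrix with entries in F_p[t] and determinant 1 is a finite product of elementary matrices e_{i,j}(r) with 1 ≤ i,j ≤ n+1, i ≠ j, and r ∈ F_p[t]. -/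
/-!
Gaussian elimination with transvections works over any Euclidean domain `R`. Let `T` be the set
of columns of `A ∈ SL_ι(R)` that are not yet those of the identity; the transvections `e_{ij}(c)`
with `j ∈ T` fix the other standard basis vectors, so they may be used freely. For `p ∈ T`,
Euclid's algorithm on the entries of column `p` indexed by `T` leaves a single nonzero one. It
is a unit because row `p` of `A⁻¹` vanishes outside `T`; it is moved to position `p` and scaled
to `1` (when `T = {p}` the determinant already forces it to be `1`), after which the rest of
column `p` is cleared and `p` leaves `T`.
-/

namespace Matrix.SpecialLinearGroup

variable {ι R : Type*} [Fintype ι] [DecidableEq ι]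

section CommRing

variable [CommRing R]

variable (ι R) in
def elementarySubgroup : Subgroup (SpecialLinearGroup ι R) :=
  Subgroup.closure {A | ∃ i j : ι, i ≠ j ∧ ∃ r : R, A.1 = Matrix.transvection i j r}

variable (R) in
def fixingBasisOutside (T : Finset ι) : Subgroup (SpecialLinearGroup ι R) :=
  fixingSubgroup _ ((fun j => Pi.single j (1 : R)) '' (T : Set ι)ᶜ)

lemma transvection_mem_elementarySubgroup {i j : ι} (hij : i ≠ j) (c : R) :
    transvection hij c ∈ elementarySubgroup ι R :=
  Subgroup.subset_closure ⟨i, j, hij, c, rfl⟩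

lemma transvection_smul {i j : ι} (hij : i ≠ j) (c : R) (u : ι → R) :
    transvection hij c • u = Function.update u i (u i + c * u j) := by
  ext l
  rcases eq_or_ne l i with rfl | hl
  · simp [SpecialLinearGroup.smul_def, transvection_coe, add_mulVec, single_mulVec]
  · simp [SpecialLinearGroup.smul_def, transvection_coe, add_mulVec, single_mulVec, hl]

lemma smul_single_one_apply (A : SpecialLinearGroup ι R) (i j : ι) :
    (A • (Pi.single j 1 : ι → R)) i = (A : Matrix ι ι R) i j := by
  simp [SpecialLinearGroup.smul_def]

lemma mem_fixingBasisOutside {T : Finset ι} {A : SpecialLinearGroup ι R} :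
    A ∈ fixingBasisOutside R T ↔
      ∀ j ∉ T, A • (Pi.single j 1 : ι → R) = Pi.single j 1 := by
  simp [fixingBasisOutside, mem_fixingSubgroup_iff]

lemma coe_apply_of_mem_fixingBasisOutside {T : Finset ι} {A : SpecialLinearGroup ι R}
    (hA : A ∈ fixingBasisOutside R T) {j : ι} (hj : j ∉ T) (i : ι) :
    (A : Matrix ι ι R) i j = (1 : Matrix ι ι R) i j := by
  rw [← smul_single_one_apply, mem_fixingBasisOutside.1 hA j hj, one_apply, Pi.single_apply]

lemma transvection_mem_fixingBasisOutside {T : Finset ι} {i j : ι} (hij : i ≠ j) (hj : j ∈ T)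
    (c : R) : transvection hij c ∈ fixingBasisOutside R T := by
  refine mem_fixingBasisOutside.2 fun l hl => ?_
  have hjl : j ≠ l := ne_of_mem_of_not_mem hj hl
  rw [transvection_smul, Pi.single_eq_of_ne hjl, mul_zero, add_zero, Function.update_eq_self]

lemma transvection_mem_inf {T : Finset ι} {i j : ι} (hij : i ≠ j) (hj : j ∈ T) (c : R) :
    transvection hij c ∈ elementarySubgroup ι R ⊓ fixingBasisOutside R T :=
  ⟨transvection_mem_elementarySubgroup hij c, transvection_mem_fixingBasisOutside hij hj c⟩

/-- Row `p` of `B⁻¹` vanishes outside `T`, so `(B⁻¹ * B) p p = 1` reads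
`B⁻¹ p q * B q p = 1`. -/
lemma isUnit_smul_single_apply {T : Finset ι} {B : SpecialLinearGroup ι R}
    (hB : B ∈ fixingBasisOutside R T) {p : ι} (hp : p ∈ T) {q : ι}
    (hq : ∀ i ∈ T, i ≠ q → (B • (Pi.single p 1 : ι → R)) i = 0) :
    IsUnit ((B • (Pi.single p 1 : ι → R)) q) := by
  set w := B • (Pi.single p 1 : ι → R)
  have hsum : ∑ i, ((B⁻¹ : SpecialLinearGroup ι R) : Matrix ι ι R) p i * w i = 1 := by
    have h := congrFun (inv_smul_smul B (Pi.single p 1 : ι → R)) p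
    rwa [Pi.single_eq_same, SpecialLinearGroup.smul_def] at h
  rw [Finset.sum_eq_single q] at hsum
  · exact IsUnit.of_mul_eq_one_right _ hsum
  · intro i _ hiq
    by_cases hi : i ∈ T
    · rw [hq i hi hiq, mul_zero]
    · rw [coe_apply_of_mem_fixingBasisOutside (inv_mem hB) hi,
        one_apply_ne (ne_of_mem_of_not_mem hp hi), zero_mul]
  · exact fun h => absurd (Finset.mem_univ q) h

lemma exists_smul_apply_eq_one {T : Finset ι} {q r : ι} (hq : q ∈ T) (hrq : r ≠ q)
    {u : ι → R} (hu : IsUnit (u q)) :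
    ∃ g ∈ elementarySubgroup ι R ⊓ fixingBasisOutside R T, (g • u) r = 1 := by
  obtain ⟨d, hd⟩ := hu
  refine ⟨transvection hrq ((1 - u r) * ↑d⁻¹), transvection_mem_inf hrq hq _, ?_⟩
  rw [transvection_smul, Function.update_self, ← hd, mul_assoc, Units.inv_mul, mul_one,
    add_sub_cancel]

/-- `B` is the identity outside column `p`, so `det B = B p p`. -/
lemma smul_single_apply_self_eq_one {p : ι} {B : SpecialLinearGroup ι R}
    (hB : B ∈ fixingBasisOutside R {p}) : (B • (Pi.single p 1 : ι → R)) p = 1 := by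
  set w := B • (Pi.single p 1 : ι → R)
  have hB' :
      (B : Matrix ι ι R) = updateCol 1 p fun i => ∑ k, w k • (1 : Matrix ι ι R) i k := by
    ext i j
    rcases eq_or_ne j p with rfl | hj
    · simp [w, smul_single_one_apply, one_apply]
    · rw [updateCol_ne hj, coe_apply_of_mem_fixingBasisOutside hB (by simpa using hj)]
  have hdet := B.2
  rwa [hB', det_updateCol_sum, det_one, smul_eq_mul, mul_one] at hdet

lemma exists_smul_eq_single {T : Finset ι} {p : ι} (hp : p ∈ T) {u : ι → R} (hu : u p = 1) :
    ∃ g ∈ elementarySubgroup ι R ⊓ fixingBasisOutside R T, g • u = Pi.single p 1 := by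
  have hzero : ∀ i ∉ (Finset.univ : Finset ι), i ≠ p → u i = 0 := by simp
  generalize (Finset.univ : Finset ι) = s at hzero
  induction s using Finset.induction_on generalizing u with
  | empty =>
    refine ⟨1, one_mem _, ?_⟩
    ext i
    rcases eq_or_ne i p with rfl | hip
    · simp [hu]
    · simp [hip, hzero i (Finset.notMem_empty i) hip]
  | insert a s _ IH =>
    by_cases hap : a = p
    · refine IH hu fun i hi hip => hzero i ?_ hip
      simp [hi, hap ▸ hip]
    set t := transvection hap (-u a)
    have ht : t • u = Function.update u a 0 := by
      rw [transvection_smul, hu, mul_one, add_neg_cancel]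
    obtain ⟨g, hg, hgu⟩ := IH (u := t • u)
      (by rw [ht, Function.update_of_ne (Ne.symm hap), hu]) fun i hi hip => by
        rcases eq_or_ne i a with rfl | hia
        · rw [ht, Function.update_self]
        · rw [ht, Function.update_of_ne hia, hzero i (by simp [hi, hia]) hip]
    exact ⟨g * t, mul_mem hg (transvection_mem_inf hap hp _), by rw [mul_smul, hgu]⟩

lemma exists_smul_smul_single_apply_self_eq_one {T : Finset ι} {B : SpecialLinearGroup ι R}
    (hB : B ∈ fixingBasisOutside R T) {p q : ι} (hp : p ∈ T) (hq : q ∈ T)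
    (hzero : ∀ i ∈ T, i ≠ q → (B • (Pi.single p 1 : ι → R)) i = 0) :
    ∃ g ∈ elementarySubgroup ι R ⊓ fixingBasisOutside R T,
      (g • B • (Pi.single p 1 : ι → R)) p = 1 := by
  have hunit := isUnit_smul_single_apply hB hp hzero
  rcases ne_or_eq p q with hpq | rfl
  · exact exists_smul_apply_eq_one hq hpq hunit
  by_cases hT : ∃ r ∈ T, r ≠ p
  · obtain ⟨r, hr, hrp⟩ := hT
    obtain ⟨g, hg, hgr⟩ := exists_smul_apply_eq_one hp hrp hunit
    obtain ⟨g', hg', hg'p⟩ := exists_smul_apply_eq_one hr hrp.symm (hgr ▸ isUnit_one)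
    exact ⟨g' * g, mul_mem hg' hg, by rwa [mul_smul]⟩
  · push Not at hT
    obtain rfl : T = {p} := Finset.eq_singleton_iff_unique_mem.2 ⟨hp, hT⟩
    exact ⟨1, one_mem _, by rw [one_smul]; exact smul_single_apply_self_eq_one hB⟩

end CommRing

section EuclideanDomain

variable [EuclideanDomain R]

lemma exists_smul_apply_eq_zero_or_eq_zero {T : Finset ι} {i j : ι} (hij : i ≠ j)
    (hi : i ∈ T) (hj : j ∈ T) (u : ι → R) :
    ∃ g ∈ elementarySubgroup ι R ⊓ fixingBasisOutside R T,
      (∀ l, l ≠ i → l ≠ j → (g • u) l = u l) ∧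
        ((g • u) i = 0 ∨ (g • u) j = 0) := by
  generalize hua : u i = a, hub : u j = b
  induction a, b using EuclideanDomain.GCD.induction generalizing i j u with
  | H0 b => exact ⟨1, one_mem _, fun l _ _ => by rw [one_smul], Or.inl (by rw [one_smul, hua])⟩
  | H1 a b _ IH =>
    set t := transvection hij.symm (-(b / a))
    have ht : t • u = Function.update u j (b % a) := by
      rw [transvection_smul, hua, hub, EuclideanDomain.mod_eq_sub_mul_div]
      ring_nf
    obtain ⟨g, hg, hfix, hzero⟩ := IH hij.symm hj hi (t • u)
      (by rw [ht, Function.update_self]) (by rw [ht, Function.update_of_ne hij, hua])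
    refine ⟨g * t, mul_mem hg (transvection_mem_inf _ hi _), fun l hli hlj => ?_, ?_⟩
    · rw [mul_smul, hfix l hlj hli, ht, Function.update_of_ne hlj]
    · rw [mul_smul]
      exact hzero.symm

lemma exists_smul_apply_eq_zero_of_ne {T : Finset ι} (hT : T.Nonempty) (u : ι → R) :
    ∃ g ∈ elementarySubgroup ι R ⊓ fixingBasisOutside R T, ∃ q ∈ T,
      ∀ i ∈ T, i ≠ q → (g • u) i = 0 := by
  classical
  induction hN : (T.filter (u · ≠ 0)).card using Nat.strong_induction_on generalizing u with
  | _ N IH =>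
  rcases lt_or_ge 1 N with hN1 | hN1
  · obtain ⟨i, hi, j, hj, hij⟩ := Finset.one_lt_card.1 (hN ▸ hN1)
    rw [Finset.mem_filter] at hi hj
    obtain ⟨g, hg, hfix, hzero⟩ := exists_smul_apply_eq_zero_or_eq_zero hij hi.1 hj.1 u
    have hsub : T.filter ((g • u) · ≠ 0) ⊂ T.filter (u · ≠ 0) := by
      refine Finset.ssubset_iff_of_subset (fun l hl => ?_) |>.2 ?_
      · rw [Finset.mem_filter] at hl ⊢
        refine ⟨hl.1, ?_⟩
        by_cases hli : l = i; · exact hli ▸ hi.2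
        by_cases hlj : l = j; · exact hlj ▸ hj.2
        exact hfix l hli hlj ▸ hl.2
      · rcases hzero with h | h
        exacts [⟨i, Finset.mem_filter.2 hi, by simp [h]⟩,
          ⟨j, Finset.mem_filter.2 hj, by simp [h]⟩]
    obtain ⟨g', hg', q, hq, h⟩ := IH _ (hN ▸ Finset.card_lt_card hsub) (g • u) rfl
    exact ⟨g' * g, mul_mem hg' hg, q, hq, by simpa only [mul_smul] using h⟩
  · rcases (T.filter (u · ≠ 0)).eq_empty_or_nonempty with hs | ⟨q, hq⟩
    · obtain ⟨p, hp⟩ := hT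
      refine ⟨1, one_mem _, p, hp, fun i hi _ => ?_⟩
      simpa [hi] using Finset.filter_eq_empty_iff.1 hs hi
    · refine ⟨1, one_mem _, q, (Finset.mem_filter.1 hq).1, fun i hi hiq => ?_⟩
      rw [one_smul]
      by_contra h
      exact hiq (Finset.card_le_one.1 (hN ▸ hN1) i (by simp [hi, h]) q hq)

lemma exists_mul_mem_fixingBasisOutside_erase {T : Finset ι} {A : SpecialLinearGroup ι R}
    (hA : A ∈ fixingBasisOutside R T) {p : ι} (hp : p ∈ T) :
    ∃ g ∈ elementarySubgroup ι R, g * A ∈ fixingBasisOutside R (T.erase p) := by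
  obtain ⟨g₁, hg₁, q, hq, hzero⟩ :=
    exists_smul_apply_eq_zero_of_ne ⟨p, hp⟩ (A • (Pi.single p 1 : ι → R))
  rw [← mul_smul] at hzero
  obtain ⟨g₂, hg₂, hone⟩ :=
    exists_smul_smul_single_apply_self_eq_one (mul_mem hg₁.2 hA) hp hq hzero
  obtain ⟨g₃, hg₃, hsingle⟩ := exists_smul_eq_single hp hone
  have hg : g₃ * g₂ * g₁ ∈ elementarySubgroup ι R ⊓ fixingBasisOutside R T :=
    mul_mem (mul_mem hg₃ hg₂) hg₁
  refine ⟨g₃ * g₂ * g₁, hg.1, mem_fixingBasisOutside.2 fun j hj => ?_⟩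
  rcases eq_or_ne j p with rfl | hjp
  · rw [mul_smul, mul_smul, mul_smul, ← mul_smul g₁, hsingle]
  · have hjT : j ∉ T := by simpa [hjp] using hj
    rw [mul_smul, mem_fixingBasisOutside.1 hA j hjT, mem_fixingBasisOutside.1 hg.2 j hjT]

theorem elementarySubgroup_eq_top : elementarySubgroup ι R = ⊤ := by
  refine (Subgroup.eq_top_iff' _).2 fun A => ?_
  have hA : A ∈ fixingBasisOutside R Finset.univ :=
    mem_fixingBasisOutside.2 fun j hj => absurd (Finset.mem_univ j) hj
  generalize (Finset.univ : Finset ι) = T at hA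
  induction T using Finset.induction_on generalizing A with
  | empty =>
    obtain rfl : A = 1 := SpecialLinearGroup.ext _ _ fun i j =>
      coe_apply_of_mem_fixingBasisOutside hA (Finset.notMem_empty j) i
    exact one_mem _
  | insert p T hpT IH =>
    obtain ⟨g, hg, hgA⟩ :=
      exists_mul_mem_fixingBasisOutside_erase hA (Finset.mem_insert_self p T)
    rw [Finset.erase_insert hpT] at hgA
    exact (Subgroup.mul_mem_cancel_left _ hg).1 (IH _ hgA)

end EuclideanDomain

end Matrix.SpecialLinearGroup

theorem specialLinearGroup_eq_closure_transvections_general (n p : ℕ) (hp : p.Prime) :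
    Subgroup.closure
      { A : Matrix.SpecialLinearGroup (Fin (n + 1)) (Polynomial (ZMod p)) |
        ∃ i j : Fin (n + 1), i ≠ j ∧ ∃ r : Polynomial (ZMod p),
          A.1 = Matrix.transvection i j r } = ⊤ := by
  have : Fact p.Prime := ⟨hp⟩
  exact Matrix.SpecialLinearGroup.elementarySubgroup_eq_top

/-- For `n ≥ 2` and `p` prime, `SL_{n+1}(F_p[t]) = EL_{n+1}(F_p[t])`:
every `(n+1)×(n+1)` matrix over `F_p[t]` of determinant `1` is a finite product of
elementary matrices `e_{i,j}(r)` (`i ≠ j`, `r ∈ F_p[t]`), i.e. the subgroup of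
`SL_{n+1}(F_p[t])` generated by the elementary matrices is the whole group. -/
theorem specialLinearGroup_eq_closure_transvections (n p : ℕ) (hn : 2 ≤ n) (hp : p.Prime) :
    Subgroup.closure
      { A : Matrix.SpecialLinearGroup (Fin (n + 1)) (Polynomial (ZMod p)) |
        ∃ i j : Fin (n + 1), i ≠ j ∧ ∃ r : Polynomial (ZMod p),
          A.1 = Matrix.transvection i j r } = ⊤ :=
  specialLinearGroup_eq_closure_transvections_general n p hp
end

section
/- Let n ≥ 3. Then for every two non-opposite roots α and β of the A_n root system, {α,β} < 𝒞_2, i.e., there is a Weyl chamber in 𝒞_2 containing both α and β. -/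
/-- The Weyl chamber `C_γ = {(γ(i),γ(j)) : i < j}` of the `A_n` root system, for a
permutation `γ` of `{1,…,n+1}` (realized as `Fin (n+1)`). -/
def Cham (n : ℕ) (γ : Equiv.Perm (Fin (n + 1))) : Set (Fin (n + 1) × Fin (n + 1)) :=
  { x | ∃ i j : Fin (n + 1), i < j ∧ x = (γ i, γ j) }

/-- The boundary `∂C_γ = {(γ(i),γ(i+1)) : 1 ≤ i ≤ n}` of the Weyl chamber `C_γ`. -/
def bCham (n : ℕ) (γ : Equiv.Perm (Fin (n + 1))) : Set (Fin (n + 1) × Fin (n + 1)) :=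
  { x | ∃ i : Fin n, x = (γ i.castSucc, γ i.succ) }

/-- `{α, β} < 𝒞`: some chamber in the collection `𝒞` contains both roots `α` and `β`. -/
def pairLt {n : ℕ} (𝒞 : Set (Set (Fin (n + 1) × Fin (n + 1))))
    (α β : Fin (n + 1) × Fin (n + 1)) : Prop :=
  ∃ C ∈ 𝒞, α ∈ C ∧ β ∈ C

/-- The collections `𝒞_k` of Weyl chambers: `𝒞_0 = {C_{γ₀^l} : 0 ≤ l ≤ n}` with `γ₀` the
cyclic permutation `(1 2 … n+1)`, and `C_γ ∈ 𝒞_k` (for `k > 0`) iff (i) every pair of roots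
of `∂C_γ` is `< 𝒞_{k-1}` and (ii) whenever `(i,j), (i,j'), (i',j) ∈ C_γ`, both
`{(i,j),(i,j')} < 𝒞_{k-1}` and `{(i,j),(i',j)} < 𝒞_{k-1}`. -/
def Ck (n : ℕ) : ℕ → Set (Set (Fin (n + 1) × Fin (n + 1)))
  | 0 => { C | ∃ l : ℕ, l ≤ n ∧ C = Cham n (finRotate (n + 1) ^ l) }
  | (k + 1) => { C | ∃ γ : Equiv.Perm (Fin (n + 1)), C = Cham n γ ∧
      (∀ α ∈ bCham n γ, ∀ β ∈ bCham n γ, pairLt (Ck n k) α β) ∧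
      (∀ i j i' j' : Fin (n + 1),
        (i, j) ∈ Cham n γ → (i, j') ∈ Cham n γ → (i', j) ∈ Cham n γ →
        pairLt (Ck n k) (i, j) (i, j') ∧ pairLt (Ck n k) (i, j) (i', j)) }

/-!
Write `D(x, y)` for the chamber of the cyclic order `x, x+1, …, x-1` with `y` moved to the end.
Given non-opposite roots `(a, b)` and `(c, d)`, the chamber `D(a, d)` contains both if `a ≠ d`,
and `D(c, b)` does if `a = d`; so it suffices to show `D(x, y) ∈ 𝒞_2` for `x ≠ y`.

The cyclic chambers lie in every `𝒞_k`, and once `𝒞_k` contains them, condition (ii) for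
`𝒞_(k+1)` is automatic: roots with a common head `a` lie in the cyclic chamber starting at `a`,
roots with a common tail `b` in the one starting at `b + 1`. The boundary of `D(x, y)` consists of
roots `(z, z + 1)`, the root `(y - 1, y + 1)` and the root `(x - 1, y)`. Every pair of these lies in
the cyclic chamber starting at `x` or at `y + 1`, except `{(y - 1, y + 1), (x - 1, y)}`. That pair
lies in the cyclic chamber starting at `x - 1` unless `x = y + 2`, and then in `D(y - 1, y)`, which
is in `𝒞_1` by the same argument as long as `3 ≠ 0` in `ℤ/(n+1)`.
-/

open Fin.CommRing

section
variable {n : ℕ} {γ : Equiv.Perm (Fin (n + 1))} {a b c : Fin (n + 1)}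

lemma natCast_ne_zero_of_pos_of_le {m : ℕ} (h0 : 0 < m) (hm : m ≤ n) :
    (m : Fin (n + 1)) ≠ 0 := by
  rw [Ne, Fin.natCast_eq_zero]
  exact Nat.not_dvd_of_pos_of_lt h0 (by omega)

lemma mem_Cham_iff : (a, b) ∈ Cham n γ ↔ γ.symm a < γ.symm b := by
  constructor
  · rintro ⟨i, j, hij, h⟩
    simp only [Prod.mk.injEq] at h
    simpa [h.1, h.2] using hij
  · intro h
    exact ⟨γ.symm a, γ.symm b, h, by simp⟩

lemma ne_of_mem_Cham (h : (a, b) ∈ Cham n γ) : a ≠ b := by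
  rintro rfl
  exact lt_irrefl _ (mem_Cham_iff.mp h)

lemma mem_Cham_trans (hab : (a, b) ∈ Cham n γ) (hbc : (b, c) ∈ Cham n γ) : (a, c) ∈ Cham n γ :=
  mem_Cham_iff.mpr ((mem_Cham_iff.mp hab).trans (mem_Cham_iff.mp hbc))

lemma apply_zero_mem_Cham (hb : b ≠ γ 0) : (γ 0, b) ∈ Cham n γ := by
  rw [mem_Cham_iff, Equiv.symm_apply_apply, Fin.pos_iff_ne_zero]
  exact fun h => hb (by rw [← h, Equiv.apply_symm_apply])

lemma mem_Cham_apply_last (ha : a ≠ γ (Fin.last n)) : (a, γ (Fin.last n)) ∈ Cham n γ := by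
  rw [mem_Cham_iff, Equiv.symm_apply_apply, Fin.lt_last_iff_ne_last]
  exact fun h => ha (by rw [← h, Equiv.apply_symm_apply])

lemma bCham_subset_Cham : bCham n γ ⊆ Cham n γ := by
  rintro _ ⟨i, rfl⟩
  exact ⟨i.castSucc, i.succ, i.castSucc_lt_succ, rfl⟩

lemma finRotate_pow_val (c : Fin (n + 1)) : finRotate (n + 1) ^ c.val = finCycle c := by
  ext : 1
  rw [Equiv.Perm.coe_pow, finCycle_eq_finRotate_iterate]

lemma mem_Cham_finCycle_iff : (a, b) ∈ Cham n (finCycle c) ↔ a - c < b - c := by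
  rw [mem_Cham_iff, finCycle_symm_apply, finCycle_symm_apply]

lemma mem_Cham_finCycle_self (hb : b ≠ a) : (a, b) ∈ Cham n (finCycle a) := by
  simpa using apply_zero_mem_Cham (γ := finCycle a) (b := b) (by simpa using hb)

lemma mem_Cham_finCycle_add_one (ha : a ≠ b) : (a, b) ∈ Cham n (finCycle (b + 1)) := by
  have hlast : finCycle (b + 1) (Fin.last n) = b := by
    rw [finCycle_apply, ← add_assoc, add_comm _ b, add_assoc, Fin.last_add_one, add_zero]
  have h := mem_Cham_apply_last (γ := finCycle (b + 1)) (a := a) (by rwa [hlast])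
  rwa [hlast] at h

lemma self_add_one_mem_Cham_finCycle (h : a + 1 ≠ c) : (a, a + 1) ∈ Cham n (finCycle c) := by
  rw [mem_Cham_finCycle_iff, show a + 1 - c = a - c + 1 by ring, Fin.lt_add_one_iff,
    Fin.lt_last_iff_ne_last]
  intro hlast
  apply h
  rw [show a + 1 = a - c + 1 + c by ring, hlast, Fin.last_add_one, zero_add]

lemma sub_one_add_one_mem_Cham_finCycle (h : a ≠ c) (h' : a + 1 ≠ c) :
    (a - 1, a + 1) ∈ Cham n (finCycle c) := by
  have h₁ := self_add_one_mem_Cham_finCycle (a := a - 1) (c := c) (by rwa [sub_add_cancel])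
  rw [sub_add_cancel] at h₁
  exact mem_Cham_trans h₁ (self_add_one_mem_Cham_finCycle h')

end

section
variable {n : ℕ} {𝒞 : Set (Set (Fin (n + 1) × Fin (n + 1)))} {a b a' b' : Fin (n + 1)}

lemma pairLt_comm {α β : Fin (n + 1) × Fin (n + 1)} : pairLt 𝒞 α β ↔ pairLt 𝒞 β α :=
  ⟨fun ⟨C, hC, hα, hβ⟩ => ⟨C, hC, hβ, hα⟩, fun ⟨C, hC, hβ, hα⟩ => ⟨C, hC, hα, hβ⟩⟩

lemma pairLt_of_fst_eq (hcyc : ∀ c, Cham n (finCycle c) ∈ 𝒞) (hb : b ≠ a) (hb' : b' ≠ a) :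
    pairLt 𝒞 (a, b) (a, b') :=
  ⟨_, hcyc a, mem_Cham_finCycle_self hb, mem_Cham_finCycle_self hb'⟩

lemma pairLt_of_snd_eq (hcyc : ∀ c, Cham n (finCycle c) ∈ 𝒞) (ha : a ≠ b) (ha' : a' ≠ b) :
    pairLt 𝒞 (a, b) (a', b) :=
  ⟨_, hcyc (b + 1), mem_Cham_finCycle_add_one ha, mem_Cham_finCycle_add_one ha'⟩

variable {k : ℕ} {γ : Equiv.Perm (Fin (n + 1))}

lemma mem_Ck_succ_of_bCham (hcyc : ∀ c, Cham n (finCycle c) ∈ Ck n k)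
    (hb : ∀ α ∈ bCham n γ, ∀ β ∈ bCham n γ, pairLt (Ck n k) α β) : Cham n γ ∈ Ck n (k + 1) :=
  ⟨γ, rfl, hb, fun _ _ _ _ h₁ h₂ h₃ =>
    ⟨pairLt_of_fst_eq hcyc (ne_of_mem_Cham h₁).symm (ne_of_mem_Cham h₂).symm,
      pairLt_of_snd_eq hcyc (ne_of_mem_Cham h₁) (ne_of_mem_Cham h₃)⟩⟩

lemma finCycle_mem_Ck (k : ℕ) (c : Fin (n + 1)) : Cham n (finCycle c) ∈ Ck n k := by
  induction k generalizing c with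
  | zero => exact ⟨c.val, Nat.lt_succ_iff.mp c.isLt, by rw [finRotate_pow_val]⟩
  | succ k ih =>
    exact mem_Ck_succ_of_bCham ih fun _ hα _ hβ =>
      ⟨_, ih c, bCham_subset_Cham hα, bCham_subset_Cham hβ⟩

end

section
variable {n : ℕ}

lemma mem_bCham_cycleIcc_last {s : Fin (n + 1)} (hs : s < Fin.last n)
    {r : Fin (n + 1) × Fin (n + 1)} (hr : r ∈ bCham n (Fin.cycleIcc s (Fin.last n))) :
    (∃ u, r = (u, u + 1) ∧ u + 1 ≠ 0 ∧ u ≠ s ∧ u + 1 ≠ s) ∨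
      r = (s - 1, s + 1) ∨ r = (Fin.last n, s) := by
  obtain ⟨i, rfl⟩ := hr
  have hsucc : i.castSucc + 1 = i.succ := Fin.coeSucc_eq_succ
  have hlt : i.castSucc < i.succ := i.castSucc_lt_succ
  rcases lt_trichotomy i.succ s with hb | rfl | hb
  · rw [Fin.cycleIcc_of_lt hb, Fin.cycleIcc_of_lt (hlt.trans hb)]
    exact Or.inl ⟨_, by rw [hsucc], hsucc ▸ i.succ_ne_zero, (hlt.trans hb).ne, hsucc ▸ hb.ne⟩
  · rw [Fin.cycleIcc_of_lt hlt, Fin.cycleIcc_of_ge_of_lt le_rfl hs]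
    exact Or.inr (Or.inl (by rw [← hsucc, add_sub_cancel_right]))
  · have hsa : s ≤ i.castSucc := by
      rw [Fin.lt_def, Fin.val_succ] at hb
      exact Fin.le_def.mpr (by simp only [Fin.val_castSucc]; omega)
    rw [Fin.cycleIcc_of_ge_of_lt hsa (Fin.castSucc_lt_last i), hsucc]
    rcases (Fin.le_last i.succ).lt_or_eq with hlast | hlast
    · rw [Fin.cycleIcc_of_ge_of_lt hb.le hlast]
      have hlt' : i.succ < i.succ + 1 := Fin.lt_add_one_iff.mpr hlast
      exact Or.inl ⟨_, rfl, ((Fin.zero_le _).trans_lt hlt').ne', hb.ne', (hb.trans hlt').ne'⟩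
    · rw [hlast, Fin.cycleIcc_of_last hs.le]
      exact Or.inr (Or.inr rfl)

end

section
variable {n : ℕ} {x y z : Fin (n + 1)}

/-- `D(x, y)`: the cyclic order `x, x+1, …, x-1` with `y` moved to the end. -/
def cycMoveLast (x y : Fin (n + 1)) : Equiv.Perm (Fin (n + 1)) :=
  finCycle x * Fin.cycleIcc (y - x) (Fin.last n)

lemma cycMoveLast_apply (t : Fin (n + 1)) :
    cycMoveLast x y t = Fin.cycleIcc (y - x) (Fin.last n) t + x :=
  rfl

lemma cycMoveLast_sub_one (x : Fin (n + 1)) : cycMoveLast x (x - 1) = finCycle x := by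
  rw [cycMoveLast, sub_sub_cancel_left, ← neg_eq_iff_eq_neg.mp (Fin.neg_last n), Fin.cycleIcc_eq,
    mul_one]

lemma mem_Cham_cycMoveLast_left (hxy : x ≠ y) (hz : z ≠ x) :
    (x, z) ∈ Cham n (cycMoveLast x y) := by
  have hzero : cycMoveLast x y 0 = x := by
    rw [cycMoveLast_apply, Fin.cycleIcc_of_lt (Fin.pos_iff_ne_zero.mpr (sub_ne_zero.mpr hxy.symm)),
      zero_add]
  have h := apply_zero_mem_Cham (γ := cycMoveLast x y) (b := z) (by rwa [hzero])
  rwa [hzero] at h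

lemma mem_Cham_cycMoveLast_right (hz : z ≠ y) : (z, y) ∈ Cham n (cycMoveLast x y) := by
  have hlast : cycMoveLast x y (Fin.last n) = y := by
    rw [cycMoveLast_apply, Fin.cycleIcc_of_last (Fin.le_last _), sub_add_cancel]
  have h := mem_Cham_apply_last (γ := cycMoveLast x y) (a := z) (by rwa [hlast])
  rwa [hlast] at h

lemma mem_bCham_cycMoveLast (hy : y ≠ x - 1) {r : Fin (n + 1) × Fin (n + 1)}
    (hr : r ∈ bCham n (cycMoveLast x y)) :
    (∃ z, r = (z, z + 1) ∧ z + 1 ≠ x ∧ z ≠ y ∧ z + 1 ≠ y) ∨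
      r = (y - 1, y + 1) ∨ r = (x - 1, y) := by
  have hlast : Fin.last n = -1 := neg_eq_iff_eq_neg.mp (Fin.neg_last n)
  have hs : y - x < Fin.last n :=
    Fin.lt_last_iff_ne_last.mpr fun h => hy (by linear_combination h + hlast)
  obtain ⟨i, rfl⟩ := hr
  simp only [cycMoveLast_apply]
  rcases mem_bCham_cycleIcc_last hs ⟨i, rfl⟩ with ⟨u, h, hu0, hus, hus'⟩ | h | h <;>
    simp only [Prod.mk.injEq] at h ⊢ <;> rw [h.1, h.2]
  · refine Or.inl ⟨u + x, ⟨rfl, by ring⟩, fun h => hu0 ?_, fun h => hus ?_, fun h => hus' ?_⟩ <;>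
      linear_combination h
  · exact Or.inr (Or.inl ⟨by ring, by ring⟩)
  · exact Or.inr (Or.inr ⟨by rw [hlast]; ring, by ring⟩)

end

section
variable {n k : ℕ} {x y : Fin (n + 1)}

lemma cycMoveLast_mem_Ck_succ (hxy : x ≠ y)
    (hskip : y ≠ x - 1 → pairLt (Ck n k) (y - 1, y + 1) (x - 1, y)) :
    Cham n (cycMoveLast x y) ∈ Ck n (k + 1) := by
  by_cases hy : y = x - 1
  · rw [hy, cycMoveLast_sub_one]
    exact finCycle_mem_Ck _ x
  have hcyc := finCycle_mem_Ck (n := n) k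
  have hskip_mem : (y - 1, y + 1) ∈ Cham n (finCycle x) :=
    sub_one_add_one_mem_Cham_finCycle hxy.symm fun h => hy (by linear_combination h)
  have hlast_mem : (x - 1, y) ∈ Cham n (finCycle (y + 1)) := mem_Cham_finCycle_add_one (Ne.symm hy)
  refine mem_Ck_succ_of_bCham hcyc fun α hα β hβ => ?_
  rcases mem_bCham_cycMoveLast hy hα with ⟨z, rfl, hzx, hzy, -⟩ | rfl | rfl <;>
    rcases mem_bCham_cycMoveLast hy hβ with ⟨z', rfl, hzx', hzy', -⟩ | rfl | rfl
  · exact ⟨_, hcyc x, self_add_one_mem_Cham_finCycle hzx, self_add_one_mem_Cham_finCycle hzx'⟩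
  · exact ⟨_, hcyc x, self_add_one_mem_Cham_finCycle hzx, hskip_mem⟩
  · exact ⟨_, hcyc (y + 1), self_add_one_mem_Cham_finCycle (by simpa using hzy), hlast_mem⟩
  · exact ⟨_, hcyc x, hskip_mem, self_add_one_mem_Cham_finCycle hzx'⟩
  · exact ⟨_, hcyc x, hskip_mem, hskip_mem⟩
  · exact hskip hy
  · exact ⟨_, hcyc (y + 1), hlast_mem, self_add_one_mem_Cham_finCycle (by simpa using hzy')⟩
  · exact pairLt_comm.mp (hskip hy)
  · exact ⟨_, hcyc (y + 1), hlast_mem, hlast_mem⟩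

lemma pairLt_sub_one_add_one (hy : y ≠ x - 1) (hy' : y + 1 ≠ x - 1) :
    pairLt (Ck n k) (y - 1, y + 1) (x - 1, y) :=
  ⟨_, finCycle_mem_Ck k (x - 1), sub_one_add_one_mem_Cham_finCycle hy hy',
    mem_Cham_finCycle_self hy⟩

lemma cycMoveLast_mem_Ck_one (hxy : x ≠ y) (hy : y + 1 ≠ x - 1) :
    Cham n (cycMoveLast x y) ∈ Ck n 1 :=
  cycMoveLast_mem_Ck_succ hxy fun hy' => pairLt_sub_one_add_one hy' hy

lemma cycMoveLast_mem_Ck_two (hn : 3 ≤ n) (hxy : x ≠ y) : Cham n (cycMoveLast x y) ∈ Ck n 2 := by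
  refine cycMoveLast_mem_Ck_succ hxy fun hy => ?_
  by_cases hx : y + 1 = x - 1
  · have hne : ∀ m : ℕ, 0 < m → m ≤ 3 → (m : Fin (n + 1)) ≠ 0 :=
      fun m h0 hm => natCast_ne_zero_of_pos_of_le h0 (hm.trans hn)
    have h1 : y - 1 ≠ y := fun h => hne 1 one_pos (by norm_num) (by linear_combination -h)
    rw [← hx]
    exact ⟨_,
      cycMoveLast_mem_Ck_one h1 fun h => hne 3 (by norm_num) le_rfl (by linear_combination h),
      mem_Cham_cycMoveLast_left h1 fun h => hne 2 two_pos (by norm_num) (by linear_combination h),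
      mem_Cham_cycMoveLast_right fun h => hne 1 one_pos (by norm_num) (by linear_combination h)⟩
  · exact pairLt_sub_one_add_one hy hx

end

/-- For `n ≥ 3`, every pair of non-opposite roots of the `A_n` root
system is contained in a common Weyl chamber belonging to `𝒞_2`. -/
theorem pair_of_roots_lt_C2 (n : ℕ) (hn : 3 ≤ n) (α β : Fin (n + 1) × Fin (n + 1))
    (hα : α.1 ≠ α.2) (hβ : β.1 ≠ β.2) (hop : β ≠ (α.2, α.1)) :
    pairLt (Ck n 2) α β := by
  obtain ⟨a, b⟩ := α
  obtain ⟨c, d⟩ := β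
  by_cases had : a = d
  · subst had
    have hcb : c ≠ b := fun h => hop (by rw [h])
    exact ⟨_, cycMoveLast_mem_Ck_two hn hcb, mem_Cham_cycMoveLast_right hα,
      mem_Cham_cycMoveLast_left hcb (Ne.symm hβ)⟩
  · exact ⟨_, cycMoveLast_mem_Ck_two hn had, mem_Cham_cycMoveLast_left had hα.symm,
      mem_Cham_cycMoveLast_right hβ⟩
end

section
/- Let n ≥ 2. For any roots of the A_n root system of the form (i,j), (i,j'), (i',j): there exists 0 ≤ l ≤ n such that both (i,j) and (i,j') belong to the Weyl chamber C_{γ_0^l}, and there exists 0 ≤ l' ≤ n such that both (i,j) and (i',j) belong to C_{γ_0^{l'}}. In other words, {(i,j),(i,j')} < 𝒞_0 and {(i,j),(i',j)} < 𝒞_0. -/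
open Fin.NatCast Fin.CommRing

namespace Fin

theorem lt_neg_one_iff_ne {n : ℕ} {a : Fin (n + 1)} : a < -1 ↔ a ≠ -1 := by
  rw [Fin.lt_def, coe_neg_one, Ne, Fin.ext_iff, coe_neg_one]
  have := a.is_le
  omega

end Fin

theorem finRotate_pow_apply (n l : ℕ) (x : Fin (n + 1)) :
    (finRotate (n + 1) ^ l) x = x + l := by
  induction l generalizing x with
  | zero => simp
  | succ l ih =>
    rw [pow_succ, Equiv.Perm.mul_apply, finRotate_apply, ih]
    push_cast
    ring

theorem mk_mem_cham_finRotate_pow_iff {n : ℕ} (l : ℕ) (a b : Fin (n + 1)) :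
    (a, b) ∈ Cham n (finRotate (n + 1) ^ l) ↔ a - l < b - l := by
  simp only [Cham, finRotate_pow_apply, Set.mem_ofPred_eq, Prod.mk.injEq]
  constructor
  · rintro ⟨p, q, hpq, rfl, rfl⟩
    simpa only [add_sub_cancel_right] using hpq
  · exact fun h ↦ ⟨a - l, b - l, h, by simp only [sub_add_cancel, and_self]⟩

theorem mk_mem_cham_finRotate_pow_val_left {n : ℕ} {a b : Fin (n + 1)} (h : a ≠ b) :
    (a, b) ∈ Cham n (finRotate (n + 1) ^ (a : ℕ)) := by
  rw [mk_mem_cham_finRotate_pow_iff, Fin.cast_val_eq_self, sub_self, Fin.pos_iff_ne_zero',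
    sub_ne_zero]
  exact h.symm

theorem mk_mem_cham_finRotate_pow_val_succ_right {n : ℕ} {a b : Fin (n + 1)} (h : a ≠ b) :
    (a, b) ∈ Cham n (finRotate (n + 1) ^ ((b + 1 : Fin (n + 1)) : ℕ)) := by
  rw [mk_mem_cham_finRotate_pow_iff, Fin.cast_val_eq_self, sub_add_cancel_left,
    Fin.lt_neg_one_iff_ne, Ne, sub_eq_iff_eq_add, neg_add_cancel_comm_assoc]
  exact h

theorem sameRowCol_pair_lt_C0_general (n : ℕ) (i j i' j' : Fin (n + 1))
    (hij : i ≠ j) (hij' : i ≠ j') (hi'j : i' ≠ j) :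
    (∃ l : ℕ, l ≤ n ∧ (i, j) ∈ Cham n (finRotate (n + 1) ^ l) ∧
      (i, j') ∈ Cham n (finRotate (n + 1) ^ l)) ∧
    (∃ l : ℕ, l ≤ n ∧ (i, j) ∈ Cham n (finRotate (n + 1) ^ l) ∧
      (i', j) ∈ Cham n (finRotate (n + 1) ^ l)) :=
  ⟨⟨i, i.is_le, mk_mem_cham_finRotate_pow_val_left hij, mk_mem_cham_finRotate_pow_val_left hij'⟩,
    ⟨(j + 1 : Fin (n + 1)), Fin.is_le _, mk_mem_cham_finRotate_pow_val_succ_right hij,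
      mk_mem_cham_finRotate_pow_val_succ_right hi'j⟩⟩

/-- For `n ≥ 2` and roots `(i,j)`, `(i,j')`, `(i',j)` of the `A_n` root
system: both `{(i,j),(i,j')}` and `{(i,j),(i',j)}` are contained in chambers of
`𝒞_0 = {C_{γ₀^l} : 0 ≤ l ≤ n}`, where `γ₀` is the cyclic permutation `(1 2 … n+1)`. -/
theorem sameRowCol_pair_lt_C0 (n : ℕ) (hn : 2 ≤ n) (i j i' j' : Fin (n + 1))
    (hij : i ≠ j) (hij' : i ≠ j') (hi'j : i' ≠ j) :
    (∃ l : ℕ, l ≤ n ∧ (i, j) ∈ Cham n (finRotate (n + 1) ^ l) ∧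
      (i, j') ∈ Cham n (finRotate (n + 1) ^ l)) ∧
    (∃ l : ℕ, l ≤ n ∧ (i, j) ∈ Cham n (finRotate (n + 1) ^ l) ∧
      (i', j) ∈ Cham n (finRotate (n + 1) ^ l)) :=
  sameRowCol_pair_lt_C0_general n i j i' j' hij hij' hi'j
end

section
/- Let n ≥ 2. For every 1 ≤ i ≤ n and every root (i',j') of the A_n root system with (i',j') ≠ (i+1,i), there exists 0 ≤ l ≤ n such that both (i,i+1) and (i',j') belong to the Weyl chamber C_{γ_0^l}; i.e., {(i,i+1),(i',j')} < 𝒞_0. -/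
/-!
Writing `γ₀` for `x ↦ x + 1` on `ℤ/(n+1)`, the chamber `C_{γ₀^l}` is the cyclic order of
`ℤ/(n+1)` read starting from `l`: a root `(x, y)` lies in it iff `x - l < y - l`. The simple
root `(i, i+1)` lies in every such chamber except the one starting at `i + 1`. Starting at
`j' + 1` puts `j'` last, so every root `(i', j')` lies in `C_{γ₀^(j'+1)}`; this chamber only
misses the simple root when `j' = i`, and then starting at `i + 2` puts `i, i + 1` last, so
`(i', i)` lies in `C_{γ₀^(i+2)}` as soon as `i' ∉ {i, i + 1}`.
-/

open Fin.NatCast Fin.CommRing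

namespace Fin

variable {n : ℕ}

theorem last_eq_neg_one : last n = -1 :=
  eq_neg_of_add_eq_zero_left (last_add_one n)

theorem le_neg_one (z : Fin (n + 1)) : z ≤ -1 :=
  last_eq_neg_one (n := n) ▸ le_last z

theorem lt_neg_one_iff {z : Fin (n + 1)} : z < -1 ↔ z ≠ -1 := by
  rw [← last_eq_neg_one, lt_last_iff_ne_last]

theorem lt_add_one_iff_ne_neg_one {z : Fin (n + 1)} : z < z + 1 ↔ z ≠ -1 := by
  rw [lt_add_one_iff, lt_last_iff_ne_last, last_eq_neg_one]

theorem lt_iff_ne_and_ne_neg_one_of_add_one_eq {z w : Fin (n + 1)} (hw : w + 1 = -1) :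
    z < w ↔ z ≠ w ∧ z ≠ -1 := by
  refine ⟨fun h ↦ ⟨h.ne, ?_⟩, fun ⟨hzw, hz⟩ ↦ hzw.lt_or_gt.resolve_right fun h ↦ hz ?_⟩
  · rintro rfl
    exact h.not_ge (le_neg_one w)
  · exact (le_neg_one z).antisymm (hw ▸ add_one_le_of_lt h)

end Fin

section Chamber

variable {n : ℕ}

theorem mem_cham_finRotate_pow_iff (a x y : Fin (n + 1)) :
    (x, y) ∈ Cham n (finRotate (n + 1) ^ (a : ℕ)) ↔ x - a < y - a := by
  simp only [Cham, finRotate_pow_apply, Fin.cast_val_eq_self, Set.mem_ofPred_eq, Prod.mk.injEq]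
  constructor
  · rintro ⟨i, j, hij, rfl, rfl⟩
    simpa using hij
  · exact fun h ↦ ⟨x - a, y - a, h, by simp, by simp⟩

theorem add_one_mem_cham_finRotate_pow_iff (a x : Fin (n + 1)) :
    (x, x + 1) ∈ Cham n (finRotate (n + 1) ^ (a : ℕ)) ↔ a ≠ x + 1 := by
  rw [mem_cham_finRotate_pow_iff, add_sub_right_comm, Fin.lt_add_one_iff_ne_neg_one]
  grind

theorem mem_cham_finRotate_pow_add_one_iff (x y : Fin (n + 1)) :
    (x, y) ∈ Cham n (finRotate (n + 1) ^ ((y + 1 : Fin (n + 1)) : ℕ)) ↔ x ≠ y := by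
  rw [mem_cham_finRotate_pow_iff, sub_add_cancel_left, Fin.lt_neg_one_iff]
  grind

theorem mem_cham_finRotate_pow_add_two_iff (x y : Fin (n + 1)) :
    (x, y) ∈ Cham n (finRotate (n + 1) ^ ((y + 2 : Fin (n + 1)) : ℕ)) ↔ x ≠ y ∧ x ≠ y + 1 := by
  rw [mem_cham_finRotate_pow_iff,
    Fin.lt_iff_ne_and_ne_neg_one_of_add_one_eq (w := y - (y + 2)) (by ring)]
  grind

end Chamber

theorem simpleRoot_pair_lt_C0_general (n : ℕ) (i : Fin n) (i' j' : Fin (n + 1))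
    (h : i' ≠ j') (hne : (i', j') ≠ (i.succ, i.castSucc)) :
    ∃ l : ℕ, l ≤ n ∧ (i.castSucc, i.succ) ∈ Cham n (finRotate (n + 1) ^ l) ∧
      (i', j') ∈ Cham n (finRotate (n + 1) ^ l) := by
  rw [← Fin.coeSucc_eq_succ] at hne ⊢
  by_cases hj : j' = i.castSucc
  · subst hj
    obtain ⟨m, rfl⟩ : ∃ m, n = m + 1 := Nat.exists_eq_add_one.mpr i.pos
    refine ⟨(i.castSucc + 2 : Fin (m + 2)), Fin.is_le _, ?_, ?_⟩
    · rw [add_one_mem_cham_finRotate_pow_iff, Ne, add_right_inj, ← one_add_one_eq_two]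
      exact add_ne_left.mpr one_ne_zero
    · exact (mem_cham_finRotate_pow_add_two_iff _ _).2 ⟨h, fun h' ↦ hne (by rw [h'])⟩
  · refine ⟨(j' + 1 : Fin (n + 1)), Fin.is_le _, ?_, (mem_cham_finRotate_pow_add_one_iff _ _).2 h⟩
    rw [add_one_mem_cham_finRotate_pow_iff, Ne, add_left_inj]
    exact hj

/-- For `n ≥ 2`, every simple root `(i,i+1)` (here `(i.castSucc, i.succ)`
for `i : Fin n`) and every root `(i',j') ≠ (i+1,i)` are contained in a common chamber of
`𝒞_0 = {C_{γ₀^l} : 0 ≤ l ≤ n}`, where `γ₀` is the cyclic permutation `(1 2 … n+1)`. -/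
theorem simpleRoot_pair_lt_C0 (n : ℕ) (hn : 2 ≤ n) (i : Fin n) (i' j' : Fin (n + 1))
    (h : i' ≠ j') (hne : (i', j') ≠ (i.succ, i.castSucc)) :
    ∃ l : ℕ, l ≤ n ∧ (i.castSucc, i.succ) ∈ Cham n (finRotate (n + 1) ^ l) ∧
      (i', j') ∈ Cham n (finRotate (n + 1) ^ l) :=
  simpleRoot_pair_lt_C0_general n i i' j' h hne
end

section
/- Let n ≥ 2 and let γ_1 be the n-cycle (n n−1 … 1) of {1,…,n+1} (so γ_1(i) = i−1 for 2 ≤ i ≤ n, γ_1(1) = n, and γ_1(n+1) = n+1). Then for every 1 ≤ l ≤ n−1, the boundary of the Weyl chamber C_{γ_1^l} equals ∂C_{γ_1^l} = {(i,i+1) : 1 ≤ i ≤ n−1, i ≠ n−l} ∪ {(n,1)} ∪ {(n−l, n+1)}. -/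
/-- Let `n ≥ 2` and let `γ₁` be the `n`-cycle `(n n−1 … 1)` of
`{1,…,n+1}` (in the `0`-based realization `Fin (n+1)`: `γ₁` fixes the last element `n`,
sends `0` to `n−1`, and sends `a` to `a−1` for `1 ≤ a ≤ n−1`).  Then for every
`1 ≤ l ≤ n−1`,
`∂C_{γ₁^l} = {(i,i+1) : 1 ≤ i ≤ n−1, i ≠ n−l} ∪ {(n,1)} ∪ {(n−l, n+1)}`
(written in `1`-based coordinates; below the root `(a,b)` in `1`-based coordinates is the
pair with values `a−1`, `b−1` in `Fin (n+1)`). -/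
theorem boundary_chamber_gamma1_pow (n : ℕ) (hn : 2 ≤ n) (γ1 : Equiv.Perm (Fin (n + 1)))
    (hγ1 : ∀ i : Fin (n + 1), ((γ1 i : ℕ) =
      if (i : ℕ) = n then n else if (i : ℕ) = 0 then n - 1 else (i : ℕ) - 1))
    (l : ℕ) (hl1 : 1 ≤ l) (hl2 : l ≤ n - 1) :
    bCham n (γ1 ^ l) =
      { x : Fin (n + 1) × Fin (n + 1) |
        (∃ i : ℕ, 1 ≤ i ∧ i ≤ n - 1 ∧ i ≠ n - l ∧ (x.1 : ℕ) = i - 1 ∧ (x.2 : ℕ) = i) ∨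
        ((x.1 : ℕ) = n - 1 ∧ (x.2 : ℕ) = 0) ∨
        ((x.1 : ℕ) = n - l - 1 ∧ (x.2 : ℕ) = n) } := by
  have hmod : ∀ m r : ℕ, r < n → (m = r ∨ m = n + r) → m % n = r := by
    rintro m r hr (rfl | rfl)
    · exact Nat.mod_eq_of_lt hr
    · rw [Nat.add_mod_left]; exact Nat.mod_eq_of_lt hr
  have aux : ∀ k, k ≤ n - 1 → ∀ i : Fin (n + 1),
      ((γ1 ^ k) i : ℕ) = if (i : ℕ) = n then n else ((i : ℕ) + n - k) % n := by
    intro k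
    induction k with
    | zero =>
      intro _ i
      have hilt : (i : ℕ) < n + 1 := i.isLt
      simp only [pow_zero, Equiv.Perm.coe_one, id_eq]
      split
      · omega
      · next h =>
        rw [Nat.sub_zero, Nat.add_mod_right, Nat.mod_eq_of_lt (by omega)]
    | succ k ih =>
      intro hk i
      have hk' : k ≤ n - 1 := by omega
      have hilt : (i : ℕ) < n + 1 := i.isLt
      rw [pow_succ, Equiv.Perm.mul_apply, ih hk' (γ1 i)]
      have hj := hγ1 i
      by_cases h1 : (i : ℕ) = n
      · rw [if_pos h1] at hj
        rw [if_pos hj, if_pos h1]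
      · rw [if_neg h1] at hj
        rw [if_neg h1]
        by_cases h0 : (i : ℕ) = 0
        · rw [if_pos h0] at hj
          rw [if_neg (by omega : (γ1 i : ℕ) ≠ n), hj,
            hmod _ (n - 1 - k) (by omega) (by omega),
            hmod _ (n - 1 - k) (by omega) (by omega)]
        · rw [if_neg h0] at hj
          rw [if_neg (by omega : (γ1 i : ℕ) ≠ n), hj]
          congr 1
          omega
  have key : ∀ i : Fin (n + 1), (i : ℕ) ≠ n → ((γ1 ^ l) i : ℕ) = ((i : ℕ) + n - l) % n := by
    intro i hi
    rw [aux l hl2 i, if_neg hi]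
  have keyn : ∀ i : Fin (n + 1), (i : ℕ) = n → ((γ1 ^ l) i : ℕ) = n := by
    intro i hi
    rw [aux l hl2 i, if_pos hi]
  ext x
  simp only [bCham, Set.mem_setOf_eq]
  constructor
  · rintro ⟨i, rfl⟩
    have hi : (i : ℕ) < n := i.isLt
    have hc : ((i.castSucc : Fin (n + 1)) : ℕ) = (i : ℕ) := rfl
    have hs : ((i.succ : Fin (n + 1)) : ℕ) = (i : ℕ) + 1 := rfl
    dsimp only
    by_cases hA : (i : ℕ) = n - 1
    · right; right
      constructor
      · rw [key _ (by omega), hc, hA, hmod _ (n - l - 1) (by omega) (by omega)]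
      · rw [keyn _ (by omega)]
    · by_cases hB : (i : ℕ) + 1 = l
      · right; left
        constructor
        · rw [key _ (by omega), hc, hmod _ (n - 1) (by omega) (by omega)]
        · rw [key _ (by omega), hs, hmod _ 0 (by omega) (by omega)]
      · left
        rcases Nat.lt_or_ge (i : ℕ) l with hcase | hcase
        · refine ⟨(i : ℕ) + 1 + n - l, by omega, by omega, by omega, ?_, ?_⟩
          · rw [key _ (by omega), hc, hmod _ ((i : ℕ) + 1 + n - l - 1) (by omega) (by omega)]
          · rw [key _ (by omega), hs, hmod _ ((i : ℕ) + 1 + n - l) (by omega) (by omega)]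
        · refine ⟨(i : ℕ) + 1 - l, by omega, by omega, by omega, ?_, ?_⟩
          · rw [key _ (by omega), hc, hmod _ ((i : ℕ) + 1 - l - 1) (by omega) (by omega)]
          · rw [key _ (by omega), hs, hmod _ ((i : ℕ) + 1 - l) (by omega) (by omega)]
  · rintro (⟨j, hj1, hj2, hj3, hx1, hx2⟩ | ⟨hx1, hx2⟩ | ⟨hx1, hx2⟩)
    · rcases Nat.lt_or_ge (j + l) n with hcase | hcase
      · refine ⟨⟨j + l - 1, by omega⟩, Prod.ext (Fin.ext ?_) (Fin.ext ?_)⟩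
        · rw [key _ (by simp [Fin.coe_castSucc]; omega)]
          simp only [Fin.coe_castSucc]
          rw [hmod _ (j - 1) (by omega) (by omega), hx1]
        · rw [key _ (by simp [Fin.val_succ]; omega)]
          simp only [Fin.val_succ]
          rw [hmod _ j (by omega) (by omega), hx2]
      · have hne : j + l ≠ n := by omega
        refine ⟨⟨j + l - n - 1, by omega⟩, Prod.ext (Fin.ext ?_) (Fin.ext ?_)⟩
        · rw [key _ (by simp [Fin.coe_castSucc]; omega)]
          simp only [Fin.coe_castSucc]
          rw [hmod _ (j - 1) (by omega) (by omega), hx1]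
        · rw [key _ (by simp [Fin.val_succ]; omega)]
          simp only [Fin.val_succ]
          rw [hmod _ j (by omega) (by omega), hx2]
    · refine ⟨⟨l - 1, by omega⟩, Prod.ext (Fin.ext ?_) (Fin.ext ?_)⟩
      · rw [key _ (by simp [Fin.coe_castSucc]; omega)]
        simp only [Fin.coe_castSucc]
        rw [hmod _ (n - 1) (by omega) (by omega), hx1]
      · rw [key _ (by simp [Fin.val_succ]; omega)]
        simp only [Fin.val_succ]
        rw [hmod _ 0 (by omega) (by omega), hx2]
    · refine ⟨⟨n - 1, by omega⟩, Prod.ext (Fin.ext ?_) (Fin.ext ?_)⟩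
      · rw [key _ (by simp [Fin.coe_castSucc]; omega)]
        simp only [Fin.coe_castSucc]
        rw [hmod _ (n - l - 1) (by omega) (by omega), hx1]
      · rw [keyn _ (by simp [Fin.val_succ]; omega), hx2]
end

section
/- Let n ≥ 2, let γ_0 be the cyclic permutation (1 2 … n+1) of {1,…,n+1}, and let γ_1 be the n-cycle (n n−1 … 1) (so γ_1(i) = i−1 for 2 ≤ i ≤ n, γ_1(1) = n, and γ_1(n+1) = n+1). Then for every two non-opposite roots (i,j), (i',j') of the A_n root system, there exist 0 ≤ t ≤ n and 0 ≤ l ≤ n−1 such that both (i,j) and (i',j') belong to the Weyl chamber C_{γ_0^t γ_1^l}. -/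
theorem finRotate_pow_val_apply {n : ℕ} (k x : Fin (n + 1)) :
    (finRotate (n + 1) ^ (k : ℕ)) x = x + k := by
  induction k using Fin.induction with
  | zero => simp
  | succ i ih =>
    rw [Fin.val_succ, ← Fin.val_castSucc, pow_succ', Equiv.Perm.mul_apply, ih,
      finRotate_apply, add_assoc, Fin.coeSucc_eq_succ]

section Chamber

variable {n : ℕ} (σ : Equiv.Perm (Fin (n + 1)))

theorem mk_apply_last_mem_Cham {x : Fin (n + 1)} (hx : x ≠ σ (Fin.last n)) :
    (x, σ (Fin.last n)) ∈ Cham n σ := by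
  refine ⟨σ.symm x, Fin.last n, Fin.lt_last_iff_ne_last.2 ?_, by simp⟩
  rwa [Ne, Equiv.symm_apply_eq]

theorem mk_apply_zero_mem_Cham {y : Fin (n + 1)} (hy : y ≠ σ 0) :
    (σ 0, y) ∈ Cham n σ := by
  refine ⟨0, σ.symm y, Fin.pos_iff_ne_zero.2 ?_, by simp⟩
  rwa [Ne, Equiv.symm_apply_eq]

end Chamber

/-- The paper's `γ₁` on `Fin (n + 1)`: it fixes `Fin.last n` and acts on `{0, …, n - 1}` as
`x ↦ x - 1 (mod n)`. -/
def IsGammaOne (n : ℕ) (γ : Equiv.Perm (Fin (n + 1))) : Prop :=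
  ∀ i : Fin (n + 1), (γ i : ℕ) =
    if (i : ℕ) = n then n else if (i : ℕ) = 0 then n - 1 else (i : ℕ) - 1

namespace IsGammaOne

variable {n : ℕ} {γ : Equiv.Perm (Fin (n + 1))}

theorem pow_apply_last (hγ : IsGammaOne n γ) (l : ℕ) :
    (γ ^ l) (Fin.last n) = Fin.last n := by
  have hlast : γ (Fin.last n) = Fin.last n := Fin.ext (by simp [hγ (Fin.last n)])
  induction l with
  | zero => rfl
  | succ l ih => rw [pow_succ, Equiv.Perm.mul_apply, hlast, ih]

theorem pow_apply_ne_last (hγ : IsGammaOne n γ) {x : Fin (n + 1)} (hx : x ≠ Fin.last n)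
    (l : ℕ) : (γ ^ l) x ≠ Fin.last n := by
  rw [← hγ.pow_apply_last l]
  exact (γ ^ l).injective.ne hx

theorem val_apply_add_one_modEq (hγ : IsGammaOne n γ) {x : Fin (n + 1)}
    (hx : x ≠ Fin.last n) : (γ x : ℕ) + 1 ≡ x [MOD n] := by
  have hxn : (x : ℕ) ≠ n := fun h => hx (Fin.ext h)
  rw [hγ x, if_neg hxn]
  split_ifs with h0
  · rw [h0, Nat.sub_add_cancel (by omega)]
    exact Nat.mod_self n
  · rw [Nat.sub_add_cancel (Nat.pos_of_ne_zero h0)]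

theorem val_pow_apply_add_modEq (hγ : IsGammaOne n γ) {x : Fin (n + 1)}
    (hx : x ≠ Fin.last n) (l : ℕ) : ((γ ^ l) x : ℕ) + l ≡ x [MOD n] := by
  induction l with
  | zero => rfl
  | succ l ih =>
    rw [pow_succ', Equiv.Perm.mul_apply, ← add_assoc, add_right_comm]
    exact ((hγ.val_apply_add_one_modEq (hγ.pow_apply_ne_last hx l)).add_right l).trans ih

theorem exists_pow_apply_zero_eq (hγ : IsGammaOne n γ) {y : Fin (n + 1)}
    (hy : y ≠ Fin.last n) : ∃ l ≤ n - 1, (γ ^ l) 0 = y := by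
  have hyn : (y : ℕ) < n := Fin.val_lt_last hy
  refine ⟨(n - y) % n, Nat.le_sub_one_of_lt (Nat.mod_lt _ (by omega)), Fin.ext ?_⟩
  have hy_add : (y : ℕ) + (n - y) % n ≡ 0 [MOD n] := by
    calc (y : ℕ) + (n - y) % n ≡ y + (n - y) [MOD n] := Nat.ModEq.add_left _ (Nat.mod_modEq _ _)
      _ = n := by omega
      _ ≡ 0 [MOD n] := Nat.modEq_zero_iff_dvd.2 dvd_rfl
  have h0 : (0 : Fin (n + 1)) ≠ Fin.last n := Fin.ne_of_val_ne (by simp; omega)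
  have hzero := hγ.val_pow_apply_add_modEq h0 ((n - y) % n)
  exact Nat.ModEq.eq_of_lt_of_lt (Nat.ModEq.add_right_cancel' _ (hzero.trans hy_add.symm))
    (Fin.val_lt_last (hγ.pow_apply_ne_last h0 _)) hyn

theorem exists_apply_zero_eq_and_apply_last_eq (hγ : IsGammaOne n γ) {s m : Fin (n + 1)} (hsm : s ≠ m) :
    ∃ t l : ℕ, t ≤ n ∧ l ≤ n - 1 ∧ (finRotate (n + 1) ^ t * γ ^ l) 0 = s ∧
      (finRotate (n + 1) ^ t * γ ^ l) (Fin.last n) = m := by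
  have hlast_add : ∀ x : Fin (n + 1), Fin.last n + (x + 1) = x := fun x => by
    rw [add_left_comm, Fin.last_add_one, add_zero]
  obtain ⟨l, hl, hγl⟩ := hγ.exists_pow_apply_zero_eq (y := s - (m + 1))
    (by rwa [Ne, sub_eq_iff_eq_add, hlast_add])
  refine ⟨(m + 1 : Fin (n + 1)), l, Fin.is_le _, hl, ?_, ?_⟩
  · rw [Equiv.Perm.mul_apply, hγl, finRotate_pow_val_apply, sub_add_cancel]
  · rw [Equiv.Perm.mul_apply, hγ.pow_apply_last, finRotate_pow_val_apply, hlast_add]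

end IsGammaOne

theorem pair_of_roots_in_chamber_gamma0_gamma1_general (n : ℕ)
    (γ1 : Equiv.Perm (Fin (n + 1)))
    (hγ1 : ∀ i : Fin (n + 1), ((γ1 i : ℕ) =
      if (i : ℕ) = n then n else if (i : ℕ) = 0 then n - 1 else (i : ℕ) - 1))
    (α β : Fin (n + 1) × Fin (n + 1)) (hα : α.1 ≠ α.2) (hβ : β.1 ≠ β.2)
    (hop : β ≠ (α.2, α.1)) :
    ∃ t l : ℕ, t ≤ n ∧ l ≤ n - 1 ∧
      α ∈ Cham n (finRotate (n + 1) ^ t * γ1 ^ l) ∧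
      β ∈ Cham n (finRotate (n + 1) ^ t * γ1 ^ l) := by
  obtain ⟨a, b⟩ := α
  obtain ⟨c, d⟩ := β
  dsimp only at hα hβ
  by_cases hcb : c = b
  · subst hcb
    have had : a ≠ d := fun h => hop (by rw [h])
    obtain ⟨t, l, ht, hl, rfl, rfl⟩ := IsGammaOne.exists_apply_zero_eq_and_apply_last_eq hγ1 had
    exact ⟨t, l, ht, hl, mk_apply_zero_mem_Cham _ hα.symm, mk_apply_last_mem_Cham _ hβ⟩
  · obtain ⟨t, l, ht, hl, rfl, rfl⟩ := IsGammaOne.exists_apply_zero_eq_and_apply_last_eq hγ1 hcb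
    exact ⟨t, l, ht, hl, mk_apply_last_mem_Cham _ hα, mk_apply_zero_mem_Cham _ hβ.symm⟩

/-- Let `n ≥ 2`, let `γ₀` be the cyclic permutation `(1 2 … n+1)`
(realized as `finRotate (n+1)`), and let `γ₁` be the `n`-cycle `(n n−1 … 1)` (in the
`0`-based realization `Fin (n+1)`: `γ₁` fixes the last element `n`, sends `0` to `n−1`, and
sends `a` to `a−1` for `1 ≤ a ≤ n−1`).  Then every pair of non-opposite roots of the `A_n`
root system is contained in a common Weyl chamber `C_{γ₀^t γ₁^l}` with `0 ≤ t ≤ n` and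
`0 ≤ l ≤ n−1`. -/
theorem pair_of_roots_in_chamber_gamma0_gamma1 (n : ℕ) (hn : 2 ≤ n)
    (γ1 : Equiv.Perm (Fin (n + 1)))
    (hγ1 : ∀ i : Fin (n + 1), ((γ1 i : ℕ) =
      if (i : ℕ) = n then n else if (i : ℕ) = 0 then n - 1 else (i : ℕ) - 1))
    (α β : Fin (n + 1) × Fin (n + 1)) (hα : α.1 ≠ α.2) (hβ : β.1 ≠ β.2)
    (hop : β ≠ (α.2, α.1)) :
    ∃ t l : ℕ, t ≤ n ∧ l ≤ n - 1 ∧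
      α ∈ Cham n (finRotate (n + 1) ^ t * γ1 ^ l) ∧
      β ∈ Cham n (finRotate (n + 1) ^ t * γ1 ^ l) :=
  pair_of_roots_in_chamber_gamma0_gamma1_general n γ1 hγ1 α β hα hβ hop
end

section
/- Let n ≥ 2. For every k ≥ 0, every permutation γ of {1,…,n+1}, and every 0 ≤ t ≤ n: if the Weyl chamber C_γ belongs to 𝒞_k, then C_{γ_0^t γ} belongs to 𝒞_k. In other words, each set 𝒞_k of Weyl chambers is invariant under the action of γ_0. -/
/-! Relabelling the roots by a permutation `σ` sends `C_γ` to `C_{σγ}` and `∂C_γ` to `∂C_{σγ}`,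
so the step `𝒞_k ↦ 𝒞_{k+1}` is equivariant under every `σ`: whenever `σ` preserves `𝒞_0` it
preserves every `𝒞_k`. Since `γ₀^(n+1) = 1`, the rotations `γ₀^t` permute
`𝒞_0 = {C_{γ₀^l} : 0 ≤ l ≤ n}`. -/

section Relabel

variable {n : ℕ}

lemma Cham_mul (σ γ : Equiv.Perm (Fin (n + 1))) :
    Cham n (σ * γ) = Prod.map σ σ '' Cham n γ := by
  ext x
  constructor
  · rintro ⟨i, j, hij, rfl⟩
    exact ⟨(γ i, γ j), ⟨i, j, hij, rfl⟩, rfl⟩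
  · rintro ⟨y, ⟨i, j, hij, rfl⟩, rfl⟩
    exact ⟨i, j, hij, rfl⟩

lemma bCham_mul (σ γ : Equiv.Perm (Fin (n + 1))) :
    bCham n (σ * γ) = Prod.map σ σ '' bCham n γ := by
  ext x
  constructor
  · rintro ⟨i, rfl⟩
    exact ⟨(γ i.castSucc, γ i.succ), ⟨i, rfl⟩, rfl⟩
  · rintro ⟨y, ⟨i, rfl⟩, rfl⟩
    exact ⟨i, rfl⟩

lemma mk_mem_Cham_mul_iff {σ γ : Equiv.Perm (Fin (n + 1))} {x y : Fin (n + 1)} :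
    (x, y) ∈ Cham n (σ * γ) ↔ (σ⁻¹ x, σ⁻¹ y) ∈ Cham n γ := by
  simp only [Cham, Set.mem_ofPred_eq, Prod.mk.injEq, Equiv.Perm.mul_apply,
    Equiv.Perm.inv_eq_iff_eq]

lemma pairLt_map {𝒞 𝒟 : Set (Set (Fin (n + 1) × Fin (n + 1)))} (f : Fin (n + 1) → Fin (n + 1))
    (h𝒞 : Set.MapsTo (Set.image (Prod.map f f)) 𝒞 𝒟) {α β : Fin (n + 1) × Fin (n + 1)}
    (hαβ : pairLt 𝒞 α β) : pairLt 𝒟 (Prod.map f f α) (Prod.map f f β) := by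
  obtain ⟨C, hC, hα, hβ⟩ := hαβ
  exact ⟨_, h𝒞 hC, Set.mem_image_of_mem _ hα, Set.mem_image_of_mem _ hβ⟩

lemma Ck_succ_mapsTo {σ : Equiv.Perm (Fin (n + 1))} {k : ℕ}
    (hk : Set.MapsTo (Set.image (Prod.map σ σ)) (Ck n k) (Ck n k)) :
    Set.MapsTo (Set.image (Prod.map σ σ)) (Ck n (k + 1)) (Ck n (k + 1)) := by
  rintro _ ⟨γ, rfl, hbd, hrows⟩
  refine ⟨σ * γ, (Cham_mul σ γ).symm, ?_, ?_⟩
  · rw [bCham_mul]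
    rintro _ ⟨α, hα, rfl⟩ _ ⟨β, hβ, rfl⟩
    exact pairLt_map σ hk (hbd α hα β hβ)
  · intro i j i' j' hij hij' hi'j
    rw [mk_mem_Cham_mul_iff] at hij hij' hi'j
    obtain ⟨hrow, hcol⟩ := hrows _ _ _ _ hij hij' hi'j
    constructor
    · simpa using pairLt_map σ hk hrow
    · simpa using pairLt_map σ hk hcol

lemma Ck_mapsTo_of_zero {σ : Equiv.Perm (Fin (n + 1))}
    (h₀ : Set.MapsTo (Set.image (Prod.map σ σ)) (Ck n 0) (Ck n 0)) (k : ℕ) :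
    Set.MapsTo (Set.image (Prod.map σ σ)) (Ck n k) (Ck n k) := by
  induction k with
  | zero => exact h₀
  | succ k ih => exact Ck_succ_mapsTo ih

end Relabel

lemma finRotate_pow_self (n : ℕ) : finRotate n ^ n = 1 := by
  match n with
  | 0 => rfl
  | 1 => exact Subsingleton.elim _ _
  | n + 2 =>
    have horder : orderOf (finRotate (n + 2)) = n + 2 := by
      rw [isCycle_finRotate.orderOf, support_finRotate, Finset.card_univ, Fintype.card_fin]
    simpa only [horder] using pow_orderOf_eq_one (finRotate (n + 2))

lemma Ck_zero_mapsTo_finRotate_pow (n t : ℕ) :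
    Set.MapsTo (Set.image (Prod.map (finRotate (n + 1) ^ t) (finRotate (n + 1) ^ t)))
      (Ck n 0) (Ck n 0) := by
  rintro _ ⟨l, -, rfl⟩
  refine ⟨(t + l) % (n + 1), Nat.lt_succ_iff.mp (Nat.mod_lt _ n.succ_pos), ?_⟩
  rw [← Cham_mul, ← pow_add, ← pow_eq_pow_mod _ (finRotate_pow_self _)]

theorem Ck_invariant_under_rotation_general (n : ℕ) (k : ℕ)
    (γ : Equiv.Perm (Fin (n + 1))) (t : ℕ)
    (h : Cham n γ ∈ Ck n k) :
    Cham n (finRotate (n + 1) ^ t * γ) ∈ Ck n k := by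
  rw [Cham_mul]
  exact Ck_mapsTo_of_zero (Ck_zero_mapsTo_finRotate_pow n t) k h

/-- For `n ≥ 2`, every `k ≥ 0`, every permutation `γ` of `{1,…,n+1}` and
every `0 ≤ t ≤ n`: if `C_γ ∈ 𝒞_k` then `C_{γ₀^t γ} ∈ 𝒞_k`; i.e. each collection `𝒞_k` is
invariant under the action of the cyclic permutation `γ₀ = (1 2 … n+1)`. -/
theorem Ck_invariant_under_rotation (n : ℕ) (hn : 2 ≤ n) (k : ℕ)
    (γ : Equiv.Perm (Fin (n + 1))) (t : ℕ) (ht : t ≤ n)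
    (h : Cham n γ ∈ Ck n k) :
    Cham n (finRotate (n + 1) ^ t * γ) ∈ Ck n k :=
  Ck_invariant_under_rotation_general n k γ t h
end
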